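/- arXiv:1405.2973 — 7 statements merged into one kernel-verified Lean document; each statement's English description precedes it below -/
import Mathlib

section
/- For a simplex σ of dimension n linearly embedded in Euclidean space, the comesh of its barycentric subdivision satisfies comesh(Sd σ) ≥ rad(σ)/(n(n+1)), i.e., every positive-dimensional simplex of the barycentric subdivision has radius at least rad(σ)/(n(n+1)). -/
/-- The radius of a simplex with vertices `q`: the distance from its barycenter to its
boundary (the union of the convex hulls of the proper subsets of vertices). -/
noncomputable def simplexRad {E : Type*} [NormedAddCommGroup E] [NormedSpace ℝ E]
    {k : ℕ} (q : Fin (k + 1) → E) : ℝ :=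
  Metric.infDist (Finset.centroid ℝ Finset.univ q)
    (⋃ (s : Finset (Fin (k + 1))) (_ : s ≠ Finset.univ), convexHull ℝ (q '' ↑s))

/-!
In barycentric coordinates with respect to `p`, a point with a nonpositive coordinate is at
distance at least `rad σ` from the barycenter of `σ`, because the segment joining them crosses
`∂σ`. Rescaling along lines, `(n + 1) rad σ |a l - b l| ≤ ‖a - b‖` for any two points `a`, `b`
and any coordinate `l`.

Let `τ` be spanned by the barycenters of a chain `S 0 ⊂ ⋯ ⊂ S k` and consider the facet of `τ`
opposite its `j`-th vertex. The weights `d` equal to `#(S (j + 1) \ S j)` on `S j \ S (j - 1)` and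
to `-#(S j \ S (j - 1))` on `S (j + 1) \ S j` (the indicator of `S k \ S (k - 1)` when `j = k`)
sum to zero over every `S i` with `i ≠ j`, but not over `S j`. Pairing `d` with the coordinates of
the barycenter of `τ` and of a point of the facet, the Lipschitz bound gives a distance at least
`rad σ / (2 n)`, resp. `rad σ / (n + 1)`.
-/

open Finset Metric

section SimplexRadius

variable {E : Type*} [NormedAddCommGroup E] [NormedSpace ℝ E] {k : ℕ} (p : Fin (k + 1) → E)

theorem centroid_univ_eq_linearCombination :
    centroid ℝ univ p = Fintype.linearCombination ℝ p fun _ => ((k : ℝ) + 1)⁻¹ := by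
  rw [centroid_def, affineCombination_eq_linear_combination _ _ _
    (sum_centroidWeights_eq_one_of_nonempty ℝ _ univ_nonempty)]
  simp [Fintype.linearCombination_apply, centroidWeights_apply]

theorem simplexRad_le_dist_of_nonpos (b : Fin (k + 1) → ℝ) (hb : ∑ l, b l = 1)
    {i : Fin (k + 1)} (hbi : b i ≤ 0) :
    simplexRad p ≤ dist (centroid ℝ univ p) (Fintype.linearCombination ℝ p b) := by
  set κ : ℝ := ((k : ℝ) + 1)⁻¹
  have hκ_pos : 0 < κ := by positivity
  obtain ⟨l₀, -, hl₀⟩ := exists_mem_eq_inf' univ_nonempty b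
  set m := univ.inf' univ_nonempty b
  have hm_le : ∀ l, m ≤ b l := fun l => inf'_le _ (mem_univ l)
  have hm : m ≤ 0 := (hm_le i).trans hbi
  -- `c` are the barycentric coordinates of the point where the segment from the centroid
  -- towards `b` leaves the simplex, through the face opposite to `l₀`
  set T : ℝ := κ / (κ - m)
  have hT_pos : 0 < T := div_pos hκ_pos (by linarith)
  have hT_le : T ≤ 1 := div_le_one_of_le₀ (by linarith) (by linarith)
  have hT : T * (κ - m) = κ := div_mul_cancel₀ κ (by linarith)
  set c : Fin (k + 1) → ℝ := fun l => T * (b l - m)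
  have hc_nonneg : ∀ l, 0 ≤ c l := fun l => mul_nonneg hT_pos.le (sub_nonneg.2 (hm_le l))
  have hc_l₀ : c l₀ = 0 := by simp [c, hl₀]
  have hc_sum : ∑ l ∈ univ.erase l₀, c l = 1 := by
    rw [sum_erase _ hc_l₀, ← mul_sum, sum_sub_distrib, hb, sum_const, card_univ,
      Fintype.card_fin, nsmul_eq_mul]
    have hκ' : ((k : ℝ) + 1) * κ = 1 := mul_inv_cancel₀ (by positivity)
    push_cast
    linear_combination ((k : ℝ) + 1) * hT + (1 - T) * hκ'
  have hc_face : Fintype.linearCombination ℝ p c ∈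
      ⋃ (s : Finset (Fin (k + 1))) (_ : s ≠ univ), convexHull ℝ (p '' ↑s) := by
    refine Set.mem_iUnion₂.2 ⟨univ.erase l₀, (erase_ssubset (mem_univ l₀)).ne, ?_⟩
    rw [Fintype.linearCombination_apply, ← sum_erase _ (by rw [hc_l₀, zero_smul])]
    exact (convex_convexHull ℝ _).sum_mem (fun l _ => hc_nonneg l) hc_sum
      fun l hl => subset_convexHull ℝ _ ⟨l, hl, rfl⟩
  have hsub : centroid ℝ univ p - Fintype.linearCombination ℝ p c =
      T • (centroid ℝ univ p - Fintype.linearCombination ℝ p b) := by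
    rw [centroid_univ_eq_linearCombination, ← map_sub, ← map_sub, ← map_smul]
    congr 1
    funext l
    simp only [Pi.sub_apply, Pi.smul_apply, smul_eq_mul, c]
    linear_combination -hT
  calc simplexRad p ≤ dist (centroid ℝ univ p) (Fintype.linearCombination ℝ p c) :=
        infDist_le_dist_of_mem hc_face
    _ = T * dist (centroid ℝ univ p) (Fintype.linearCombination ℝ p b) := by
        rw [dist_eq_norm, dist_eq_norm, hsub, norm_smul, Real.norm_of_nonneg hT_pos.le]
    _ ≤ dist (centroid ℝ univ p) (Fintype.linearCombination ℝ p b) :=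
        mul_le_of_le_one_left dist_nonneg hT_le

theorem mul_simplexRad_mul_abs_sub_le (a b : Fin (k + 1) → ℝ) (ha : ∑ l, a l = 1)
    (hb : ∑ l, b l = 1) (i : Fin (k + 1)) :
    ((k : ℝ) + 1) * simplexRad p * |a i - b i| ≤
      dist (Fintype.linearCombination ℝ p a) (Fintype.linearCombination ℝ p b) := by
  wlog hab : b i < a i generalizing a b
  · rcases (not_lt.1 hab).eq_or_lt with h | h
    · simp [h]
    · rw [abs_sub_comm, dist_comm]
      exact this b a hb ha h
  set κ : ℝ := ((k : ℝ) + 1)⁻¹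
  have hκ : ((k : ℝ) + 1) * κ = 1 := mul_inv_cancel₀ (by positivity)
  set δ := a i - b i
  have hδ : 0 < δ := sub_pos.2 hab
  -- the centroid moved by `κ / δ • (b - a)` has vanishing `i`-th coordinate
  set e : Fin (k + 1) → ℝ := fun l => κ - κ / δ * (a l - b l)
  have he_sum : ∑ l, e l = 1 := by
    simp only [e, sum_sub_distrib, ← mul_sum, ha, hb, sum_const, card_univ, Fintype.card_fin,
      nsmul_eq_mul, sub_self, mul_zero, sub_zero]
    push_cast
    exact hκ
  have he_i : e i = 0 := by
    simp only [e]
    field_simp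
    simp [δ]
  have hdist : dist (centroid ℝ univ p) (Fintype.linearCombination ℝ p e) =
      κ / δ * dist (Fintype.linearCombination ℝ p a) (Fintype.linearCombination ℝ p b) := by
    have : (fun _ => κ) - e = (κ / δ) • (a - b) := by
      funext l
      simp [e]
    rw [centroid_univ_eq_linearCombination, dist_eq_norm, dist_eq_norm, ← map_sub, ← map_sub,
      this, map_smul, norm_smul, Real.norm_of_nonneg (by positivity)]
  have h := simplexRad_le_dist_of_nonpos p e he_sum he_i.le
  rw [hdist, div_mul_eq_mul_div, le_div_iff₀ hδ] at h
  calc ((k : ℝ) + 1) * simplexRad p * |δ| = ((k : ℝ) + 1) * (simplexRad p * δ) := by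
        rw [abs_of_pos hδ, mul_assoc]
    _ ≤ ((k : ℝ) + 1) * (κ * dist (Fintype.linearCombination ℝ p a)
          (Fintype.linearCombination ℝ p b)) := by gcongr
    _ = dist (Fintype.linearCombination ℝ p a) (Fintype.linearCombination ℝ p b) := by
        rw [← mul_assoc, hκ, one_mul]

theorem mul_simplexRad_mul_abs_sum_le (a b d : Fin (k + 1) → ℝ) (ha : ∑ l, a l = 1)
    (hb : ∑ l, b l = 1) :
    ((k : ℝ) + 1) * simplexRad p * |∑ l, (a l - b l) * d l| ≤
      (∑ l, |d l|) * dist (Fintype.linearCombination ℝ p a) (Fintype.linearCombination ℝ p b) := by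
  calc ((k : ℝ) + 1) * simplexRad p * |∑ l, (a l - b l) * d l|
      ≤ ((k : ℝ) + 1) * simplexRad p * ∑ l, |(a l - b l) * d l| := by
        gcongr
        · exact mul_nonneg (by positivity) infDist_nonneg
        · exact abs_sum_le_sum_abs _ _
    _ = ∑ l, |d l| * (((k : ℝ) + 1) * simplexRad p * |a l - b l|) := by
        rw [mul_sum]
        exact sum_congr rfl fun l _ => by rw [abs_mul]; ring
    _ ≤ (∑ l, |d l|) * dist (Fintype.linearCombination ℝ p a)
          (Fintype.linearCombination ℝ p b) := by
        rw [sum_mul]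
        gcongr with l
        exact mul_simplexRad_mul_abs_sub_le p a b ha hb l

end SimplexRadius

section Subdivision

variable {ι E : Type*} [Fintype ι] [NormedAddCommGroup E] [NormedSpace ℝ E]

theorem centroid_eq_linearCombination_centroidWeightsIndicator (p : ι → E) {s : Finset ι}
    (hs : s.Nonempty) :
    s.centroid ℝ p = Fintype.linearCombination ℝ p (s.centroidWeightsIndicator ℝ) := by
  rw [centroid_eq_affineCombination_fintype, affineCombination_eq_linear_combination _ _ _
    (sum_centroidWeightsIndicator_eq_one_of_nonempty ℝ _ hs), Fintype.linearCombination_apply]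

theorem sum_centroidWeightsIndicator_mul (s : Finset ι) (d : ι → ℝ) :
    ∑ l, s.centroidWeightsIndicator ℝ l * d l = (#s : ℝ)⁻¹ * ∑ l ∈ s, d l := by
  classical
  simp [centroidWeightsIndicator_def, Set.indicator_apply, ite_mul, sum_ite_mem, mul_sum]

end Subdivision

section FaceDistance

variable {E : Type*} [NormedAddCommGroup E] [NormedSpace ℝ E] {n k : ℕ}

theorem simplexRad_mul_abs_le_dist_of_mem_convexHull (p : Fin (n + 1) → E) (hkn : k ≤ n)
    (μ : Fin (k + 1) → Fin (n + 1) → ℝ) (hμ : ∀ i, ∑ l, μ i l = 1) (d : Fin (n + 1) → ℝ)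
    {j : Fin (k + 1)} (hd : ∀ i ≠ j, ∑ l, μ i l * d l = 0) {s : Finset (Fin (k + 1))}
    (hj : j ∉ s) {x : E}
    (hx : x ∈ convexHull ℝ ((fun i => Fintype.linearCombination ℝ p (μ i)) '' s)) :
    simplexRad p * |∑ l, μ j l * d l| ≤
      (∑ l, |d l|) * dist (centroid ℝ univ fun i => Fintype.linearCombination ℝ p (μ i)) x := by
  set L := Fintype.linearCombination ℝ p
  set κ : ℝ := ((k : ℝ) + 1)⁻¹
  have hκ : ((k : ℝ) + 1) * κ = 1 := mul_inv_cancel₀ (by positivity)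
  -- the barycentric coordinates `b` of `x` with respect to `p` lie in the convex hull of the
  -- `μ i`, `i ∈ s`, hence on the affine hyperplanes `∑ b = 1` and `∑ b * d = 0`
  rw [← Set.image_image (g := L), ← LinearMap.image_convexHull] at hx
  obtain ⟨b, hb, rfl⟩ := hx
  have hb' : b ∈ {v | Fintype.linearCombination ℝ (fun _ => (1 : ℝ)) v = 1} ∩
      {v | Fintype.linearCombination ℝ d v = 0} := by
    refine convexHull_min ?_ ((convex_hyperplane (LinearMap.isLinear _) _).inter
      (convex_hyperplane (LinearMap.isLinear _) _)) hb
    rintro _ ⟨i, hi, rfl⟩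
    simp only [Set.mem_inter_iff, Set.mem_ofPred_eq, Fintype.linearCombination_apply, smul_eq_mul,
      mul_one]
    exact ⟨hμ i, hd i (ne_of_mem_of_not_mem hi hj)⟩
  simp only [Set.mem_inter_iff, Set.mem_ofPred_eq, Fintype.linearCombination_apply, smul_eq_mul,
    mul_one] at hb'
  obtain ⟨hb_sum, hb_d⟩ := hb'
  set w : Fin (n + 1) → ℝ := ∑ i, κ • μ i
  have hw : centroid ℝ univ (fun i => L (μ i)) = L w := by
    rw [centroid_univ_eq_linearCombination, Fintype.linearCombination_apply, map_sum]
    simp only [map_smul]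
    rfl
  have hw_sum : ∑ l, w l = 1 := by
    simp only [w, Finset.sum_apply, Pi.smul_apply, smul_eq_mul]
    rw [sum_comm]
    simp only [← mul_sum, hμ, mul_one, sum_const, card_univ, Fintype.card_fin, nsmul_eq_mul]
    push_cast
    exact hκ
  have hw_d : ∑ l, (w l - b l) * d l = κ * ∑ l, μ j l * d l := by
    simp only [sub_mul, sum_sub_distrib, hb_d, sub_zero, w, Finset.sum_apply, Pi.smul_apply,
      smul_eq_mul, sum_mul, mul_assoc]
    rw [sum_comm]
    simp only [← mul_sum]
    rw [sum_eq_single_of_mem j (mem_univ j) fun i _ hi => hd i hi]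
  have h := mul_simplexRad_mul_abs_sum_le p w b d hw_sum hb_sum
  rw [hw_d, ← hw, abs_mul, abs_of_pos (by positivity : 0 < κ)] at h
  have hnκ : 1 ≤ ((n : ℝ) + 1) * κ := by
    rw [← div_eq_mul_inv, one_le_div (by positivity)]
    exact_mod_cast Nat.succ_le_succ hkn
  calc simplexRad p * |∑ l, μ j l * d l|
      ≤ (((n : ℝ) + 1) * κ) * (simplexRad p * |∑ l, μ j l * d l|) :=
        le_mul_of_one_le_left (mul_nonneg infDist_nonneg (abs_nonneg _)) hnκ
    _ = ((n : ℝ) + 1) * simplexRad p * (κ * |∑ l, μ j l * d l|) := by ring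
    _ ≤ _ := h

end FaceDistance

section Chain

variable {n k : ℕ} {S : Fin (k + 1) → Finset (Fin (n + 1))}

theorem le_of_strictMono_of_nonempty (hS : StrictMono S) (h0 : (S 0).Nonempty) : k ≤ n := by
  have h := card_le_card_of_injOn (fun i => #(S i)) (s := univ) (t := Icc 1 (n + 1))
    (fun i _ => mem_Icc.2 ⟨card_pos.2 (h0.mono (hS.monotone (Fin.zero_le i))),
      (card_le_univ _).trans_eq (Fintype.card_fin _)⟩)
    (card_strictMono.comp hS).injective.injOn
  simpa using h

theorem exists_ssubset_forall_lt_subset (hS : StrictMono S) (h0 : (S 0).Nonempty)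
    (j : Fin (k + 1)) : ∃ A, A ⊂ S j ∧ ∀ i < j, S i ⊆ A := by
  cases j using Fin.cases with
  | zero => exact ⟨∅, empty_ssubset.2 h0, fun i hi => absurd hi (Fin.not_lt_zero i)⟩
  | succ j => exact ⟨S j.castSucc, hS Fin.castSucc_lt_succ,
      fun i hi => hS.monotone (Fin.le_castSucc_iff.2 hi)⟩

theorem sum_ite_mem_const {α : Type*} [DecidableEq α] (u t : Finset α) (c : ℝ) :
    ∑ l ∈ u, (if l ∈ t then c else 0) = #(u ∩ t) * c := by
  rw [sum_ite_mem, sum_const, nsmul_eq_mul]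

theorem exists_weights_separating_last (hn : 1 ≤ n) (hS : StrictMono S)
    (h0 : (S 0).Nonempty) :
    ∃ d : Fin (n + 1) → ℝ, (∀ i ≠ Fin.last k, ∑ l ∈ S i, d l = 0) ∧
      0 < (#(S (Fin.last k)) : ℝ)⁻¹ * ∑ l ∈ S (Fin.last k), d l ∧
      ∑ l, |d l| ≤ n * (n + 1) * ((#(S (Fin.last k)) : ℝ)⁻¹ * ∑ l ∈ S (Fin.last k), d l) := by
  set B := S (Fin.last k)
  obtain ⟨A, hAB, hA⟩ := exists_ssubset_forall_lt_subset hS h0 (Fin.last k)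
  have hBA : (B \ A).Nonempty := sdiff_nonempty.2 (not_subset_of_ssubset hAB)
  have hB_pos : (0 : ℝ) < #B := by exact_mod_cast card_pos.2 (hBA.mono sdiff_subset)
  have hB_le : (#B : ℝ) ≤ n * (n + 1) := by
    have : (#B : ℝ) ≤ n + 1 := by exact_mod_cast (card_le_univ B).trans_eq (Fintype.card_fin _)
    nlinarith [(by exact_mod_cast hn : (1 : ℝ) ≤ n)]
  set d : Fin (n + 1) → ℝ := fun l => if l ∈ B \ A then 1 else 0
  have hd_B : ∑ l ∈ B, d l = #(B \ A) := by
    rw [sum_ite_mem_const, inter_eq_right.2 sdiff_subset, mul_one]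
  have hd_abs : ∑ l, |d l| = #(B \ A) := by
    simp only [d, abs_ite, abs_one, abs_zero]
    rw [sum_ite_mem_const, univ_inter, mul_one]
  refine ⟨d, fun i hi => ?_, by rw [hd_B]; positivity, ?_⟩
  · refine sum_eq_zero fun l hl => if_neg fun h => (mem_sdiff.1 h).2 ?_
    exact hA i (Fin.lt_last_iff_ne_last.2 hi) hl
  · rw [hd_B, hd_abs, ← mul_assoc]
    refine le_mul_of_one_le_left (by positivity) ?_
    rwa [← div_eq_mul_inv, one_le_div hB_pos]

theorem exists_weights_separating_castSucc (hn : 1 ≤ n) (hS : StrictMono S)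
    (h0 : (S 0).Nonempty) (j : Fin k) :
    ∃ d : Fin (n + 1) → ℝ, (∀ i ≠ j.castSucc, ∑ l ∈ S i, d l = 0) ∧
      0 < (#(S j.castSucc) : ℝ)⁻¹ * ∑ l ∈ S j.castSucc, d l ∧
      ∑ l, |d l| ≤ n * (n + 1) * ((#(S j.castSucc) : ℝ)⁻¹ * ∑ l ∈ S j.castSucc, d l) := by
  set B := S j.castSucc
  set C := S j.succ
  obtain ⟨A, hAB, hA⟩ := exists_ssubset_forall_lt_subset hS h0 j.castSucc
  have hBC : B ⊂ C := hS Fin.castSucc_lt_succ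
  have hBA : (B \ A).Nonempty := sdiff_nonempty.2 (not_subset_of_ssubset hAB)
  have hCB : (C \ B).Nonempty := sdiff_nonempty.2 (not_subset_of_ssubset hBC)
  have hB_pos : (0 : ℝ) < #B := by exact_mod_cast card_pos.2 (hBA.mono sdiff_subset)
  have hB_le : 2 * (#B : ℝ) ≤ n * (n + 1) := by
    have : #B ≤ n := Nat.le_of_lt_succ <|
      (card_lt_card hBC).trans_le ((card_le_univ C).trans_eq (Fintype.card_fin _))
    have : (#B : ℝ) ≤ n := by exact_mod_cast this
    nlinarith [(by exact_mod_cast hn : (1 : ℝ) ≤ n)]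
  set d : Fin (n + 1) → ℝ := fun l =>
    (if l ∈ B \ A then (#(C \ B) : ℝ) else 0) - (if l ∈ C \ B then (#(B \ A) : ℝ) else 0)
  have hd : ∀ u, ∑ l ∈ u, d l = #(u ∩ (B \ A)) * #(C \ B) - #(u ∩ (C \ B)) * #(B \ A) := by
    intro u
    rw [sum_sub_distrib, sum_ite_mem_const, sum_ite_mem_const]
  have hd_B : ∑ l ∈ B, d l = #(B \ A) * #(C \ B) := by
    rw [hd, inter_eq_right.2 sdiff_subset, disjoint_iff_inter_eq_empty.1 disjoint_sdiff]
    simp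
  have hd_abs : ∑ l, |d l| ≤ 2 * (#(B \ A) * #(C \ B)) := by
    calc ∑ l, |d l| ≤ ∑ l, ((if l ∈ B \ A then (#(C \ B) : ℝ) else 0) +
          (if l ∈ C \ B then (#(B \ A) : ℝ) else 0)) := by
          refine sum_le_sum fun l _ => (abs_sub _ _).trans_eq ?_
          simp only [abs_ite, Nat.abs_cast, abs_zero]
      _ = 2 * (#(B \ A) * #(C \ B)) := by
          rw [sum_add_distrib, sum_ite_mem_const, sum_ite_mem_const, univ_inter, univ_inter]
          ring
  refine ⟨d, fun i hi => ?_, by rw [hd_B]; positivity, ?_⟩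
  · rw [hd]
    rcases hi.lt_or_gt with hi | hi
    · have hiA := hA i hi
      rw [disjoint_iff_inter_eq_empty.1 (disjoint_sdiff.mono_left hiA),
        disjoint_iff_inter_eq_empty.1 (disjoint_sdiff.mono_left (hiA.trans hAB.subset))]
      simp
    · have hCi : C ⊆ S i := hS.monotone (Fin.castSucc_lt_iff_succ_le.1 hi)
      rw [inter_eq_right.2 (sdiff_subset.trans (hBC.subset.trans hCi)),
        inter_eq_right.2 (sdiff_subset.trans hCi)]
      ring
  · rw [hd_B]
    calc ∑ l, |d l| ≤ 2 * (#(B \ A) * #(C \ B)) := hd_abs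
      _ ≤ (n * (n + 1) * (#B : ℝ)⁻¹) * (#(B \ A) * #(C \ B)) := by
          gcongr
          rwa [← div_eq_mul_inv, le_div_iff₀ hB_pos]
      _ = _ := by ring

theorem exists_weights_separating (hn : 1 ≤ n) (hS : StrictMono S) (h0 : (S 0).Nonempty)
    (j : Fin (k + 1)) :
    ∃ d : Fin (n + 1) → ℝ, (∀ i ≠ j, ∑ l ∈ S i, d l = 0) ∧
      0 < (#(S j) : ℝ)⁻¹ * ∑ l ∈ S j, d l ∧
      ∑ l, |d l| ≤ n * (n + 1) * ((#(S j) : ℝ)⁻¹ * ∑ l ∈ S j, d l) := by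
  cases j using Fin.lastCases with
  | last => exact exists_weights_separating_last hn hS h0
  | cast j => exact exists_weights_separating_castSucc hn hS h0 j

end Chain

theorem stmt2_general (N n : ℕ) (hn : 1 ≤ n) (p : Fin (n + 1) → EuclideanSpace ℝ (Fin N))
    (k : ℕ) (hk : 1 ≤ k) (S : Fin (k + 1) → Finset (Fin (n + 1)))
    (hS : StrictMono S) (hSne : ∀ j, (S j).Nonempty) :
    simplexRad p / ((n : ℝ) * ((n : ℝ) + 1)) ≤
      simplexRad (fun j => Finset.centroid ℝ (S j) p) := by
  set μ : Fin (k + 1) → Fin (n + 1) → ℝ := fun j => (S j).centroidWeightsIndicator ℝ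
  have hq : (fun j => centroid ℝ (S j) p) = fun j => Fintype.linearCombination ℝ p (μ j) :=
    funext fun j => centroid_eq_linearCombination_centroidWeightsIndicator p (hSne j)
  have hfaces : (⋃ (s : Finset (Fin (k + 1))) (_ : s ≠ univ),
      convexHull ℝ ((fun j => Fintype.linearCombination ℝ p (μ j)) '' ↑s)).Nonempty := by
    have : NeZero k := ⟨by omega⟩
    refine ⟨_, Set.mem_iUnion₂.2 ⟨{0}, fun h => (Fin.last_pos' (n := k)).ne ?_,
      subset_convexHull ℝ _ ⟨0, mem_singleton_self 0, rfl⟩⟩⟩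
    exact (mem_singleton.1 (h ▸ mem_univ (Fin.last k))).symm
  rw [hq]
  refine (le_infDist hfaces).2 fun x hx => ?_
  obtain ⟨s, hs, hx⟩ := Set.mem_iUnion₂.1 hx
  obtain ⟨j, hj⟩ : ∃ j, j ∉ s := by simpa [eq_univ_iff_forall] using hs
  obtain ⟨d, hd, hτ, hd_abs⟩ := exists_weights_separating hn hS (hSne 0) j
  have h := simplexRad_mul_abs_le_dist_of_mem_convexHull p
    (le_of_strictMono_of_nonempty hS (hSne 0)) μ
    (fun i => sum_centroidWeightsIndicator_eq_one_of_nonempty ℝ _ (hSne i)) d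
    (fun i hi => by rw [sum_centroidWeightsIndicator_mul, hd i hi, mul_zero]) hj hx
  rw [sum_centroidWeightsIndicator_mul, abs_of_pos hτ] at h
  rw [div_le_iff₀ (by positivity)]
  refine le_of_mul_le_mul_right (h.trans ?_) hτ
  calc _ ≤ _ := mul_le_mul_of_nonneg_right hd_abs dist_nonneg
    _ = _ := by ring

/-- For a simplex σ of dimension n linearly embedded in Euclidean space,
every positive-dimensional simplex of the barycentric subdivision (spanned by the
barycenters of a strict chain of faces of σ) has radius at least rad(σ)/(n(n+1)). -/
theorem stmt2 (N n : ℕ) (hn : 1 ≤ n) (p : Fin (n + 1) → EuclideanSpace ℝ (Fin N))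
    (hp : AffineIndependent ℝ p)
    (k : ℕ) (hk : 1 ≤ k) (S : Fin (k + 1) → Finset (Fin (n + 1)))
    (hS : StrictMono S) (hSne : ∀ j, (S j).Nonempty) :
    simplexRad p / ((n : ℝ) * ((n : ℝ) + 1)) ≤
      simplexRad (fun j => Finset.centroid ℝ (S j) p) :=
  stmt2_general N n hn p k hk S hS hSne
end

section
/- Let A be an additive category, X a locally finite simplicial complex (as a poset of simplices), and C a finite chain complex in the category A*(X) whose morphisms f: M → N satisfy f_{τ,σ} = 0 unless τ ≤ σ. If for each simplex σ the diagonal chain complex C(σ) (with differential d_{σ,σ}) admits a chain contraction P_σ in A, then the map defined by P_{τ,σ} = Σ_{i=0}^{|σ|-|τ|} Σ_{τ=σ_0<...<σ_i=σ} (-1)^i P_{σ_0} d_{σ_0σ_1} P_{σ_1} ... d_{σ_{i-1}σ_i} P_{σ_i} is a chain contraction of C in A*(X). -/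
/-!
Write `d = d₀ + N` in `A*(X)`, with `d₀` diagonal and `N` strictly below the diagonal, and
`P₀ = diag (P_σ)`; composition is read diagrammatically. Sorting the chains
`ρ = σ₀ < ⋯ < σ_k = σ` by their penultimate simplex shows `P = P₀ (1 - N P)`. Then `dP + Pd = 1`
is checked entrywise by induction on the interval `[ρ, σ]`: on the diagonal it is
`d₀P₀ + P₀d₀ = 1`; off it, `d² = 0` gives `d₀N = -Nd`, and with `d₀P₀ + P₀d₀ = 1` and the
induction hypothesis `dP = 1 - Pd` on smaller intervals one finds
`(dP)_{σρ} = -P_σ (d - NPd)_{σρ}`, while the recursion gives `(Pd)_{σρ} = P_σ (d - NPd)_{σρ}`.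
-/

open CategoryTheory

attribute [local instance] Classical.propDecidable

/-- A finite chain complex in the simplicially graded additive category `A*(X)`:
objects are `X`-indexed collections of objects of `A`, the differential has components
`d i j σ τ : C_i(σ) ⟶ C_j(τ)` supported on `τ ≤ σ` and `j = i - 1`, with `d² = 0`
componentwise, and the complex is bounded. -/
structure GCx (X : Type) [PartialOrder X] [∀ ρ σ : X, Fintype {τ : X // ρ ≤ τ ∧ τ ≤ σ}]
    (A : Type) [Category A] [Preadditive A] where
  ob : ℤ → X → A
  d : ∀ (i j : ℤ) (σ τ : X), ob i σ ⟶ ob j τ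
  shape : ∀ (i j : ℤ) (σ τ : X), ¬(τ ≤ σ ∧ j = i - 1) → d i j σ τ = 0
  dsq : ∀ (i : ℤ) (σ ρ : X),
    (∑ τ : {τ : X // ρ ≤ τ ∧ τ ≤ σ}, d i (i - 1) σ τ.1 ≫ d (i - 1) (i - 1 - 1) τ.1 ρ) = 0
  bounded : ∃ N : ℕ, ∀ (i : ℤ) (σ : X), (N : ℤ) < |i| → Limits.IsZero (ob i σ)

variable {X : Type} [PartialOrder X] [∀ ρ σ : X, Fintype {τ : X // ρ ≤ τ ∧ τ ≤ σ}]
variable {A : Type} [Category A] [Preadditive A]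

/-- A chain contraction in `A` of the diagonal (local) chain complex `C(σ)`. -/
structure LocalContraction (C : GCx X A) (σ : X) where
  P : ∀ i j : ℤ, C.ob i σ ⟶ C.ob j σ
  shape : ∀ i j : ℤ, j ≠ i + 1 → P i j = 0
  contr : ∀ i : ℤ,
    C.d i (i - 1) σ σ ≫ P (i - 1) i + P i (i + 1) ≫ C.d (i + 1) i σ σ = 𝟙 (C.ob i σ)

/-- The alternating composite `P_{σ₀} d_{σ₀σ₁} P_{σ₁} ⋯ d_{σ_{i-1}σ_i} P_{σ_i}`
along a chain `c = (σ₀, …, σ_i)`. -/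
noncomputable def chainComp (C : GCx X A) (Pl : ∀ σ : X, LocalContraction C σ) (n : ℤ) :
    ∀ (i : ℕ) (c : Fin (i + 1) → X), (C.ob n (c (Fin.last i)) ⟶ C.ob (n + 1) (c 0))
  | 0, c => (Pl (c 0)).P n (n + 1)
  | (i + 1), c =>
      (Pl (c (Fin.last (i + 1)))).P n (n + 1) ≫
        C.d (n + 1) n (c (Fin.last (i + 1))) (c ((Fin.last i).castSucc)) ≫
        chainComp C Pl n i (fun j => c j.castSucc)

/-- The global degree `+1` map
`P_{τ,σ} = Σ_{i} Σ_{τ=σ₀<⋯<σ_i=σ} (−1)^i P_{σ₀} d_{σ₀σ₁} P_{σ₁} ⋯ d_{σ_{i-1}σ_i} P_{σ_i}`. -/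
noncomputable def globalP (C : GCx X A) (Pl : ∀ σ : X, LocalContraction C σ)
    (i j : ℤ) (σ τ : X) : C.ob i σ ⟶ C.ob j τ :=
  if h : τ ≤ σ ∧ j = i + 1 then
    (∑ k ∈ Finset.range (Fintype.card {τ' : X // τ ≤ τ' ∧ τ' ≤ σ}),
        ∑ c : {c : Fin (k + 1) → {τ' : X // τ ≤ τ' ∧ τ' ≤ σ} //
            StrictMono (fun j' => (c j').1) ∧ (c 0).1 = τ ∧ (c (Fin.last k)).1 = σ},
          ((-1 : ℤ) ^ k) •
            (eqToHom (congrArg (C.ob i) c.2.2.2.symm) ≫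
              chainComp C Pl i k (fun j' => (c.1 j').1) ≫
              eqToHom (congrArg (C.ob (i + 1)) c.2.2.1))) ≫
      eqToHom (congrArg (fun m => C.ob m τ) h.2.symm)
  else 0


open Limits Preadditive

set_option linter.unusedSectionVars false

abbrev Itv (ρ σ : X) : Type := {τ : X // ρ ≤ τ ∧ τ ≤ σ}

instance (σ : X) : Subsingleton (Itv σ σ) :=
  ⟨fun a b => Subtype.ext ((le_antisymm a.2.2 a.2.1).trans (le_antisymm b.2.2 b.2.1).symm)⟩

lemma card_Itv_le {ρ u σ : X} (h : u ≤ σ) :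
    Fintype.card (Itv ρ u) ≤ Fintype.card (Itv ρ σ) :=
  Fintype.card_le_of_injective (fun t => ⟨t.1, t.2.1, t.2.2.trans h⟩)
    (fun _ _ hab => Subtype.ext (Subtype.mk.inj hab))

lemma card_Itv_lt {ρ u σ : X} (h₁ : ρ ≤ u) (h₂ : u ≤ σ) (hne : u ≠ σ) :
    Fintype.card (Itv ρ u) < Fintype.card (Itv ρ σ) := by
  refine Fintype.card_lt_of_injective_of_notMem (fun t => ⟨t.1, t.2.1, t.2.2.trans h₂⟩)
    (fun _ _ hab => Subtype.ext (Subtype.mk.inj hab)) (b := ⟨σ, h₁.trans h₂, le_rfl⟩) ?_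
  rintro ⟨t, ht⟩
  exact hne (le_antisymm h₂ (Subtype.mk.inj ht ▸ t.2.2))

section StarCategory

/-- Composition in `A*(X)`, written in diagrammatic order. -/
noncomputable def starComp {F G H : X → A} (f : ∀ σ τ, F σ ⟶ G τ) (g : ∀ σ τ, G σ ⟶ H τ)
    (σ ρ : X) : F σ ⟶ H ρ :=
  ∑ τ : Itv ρ σ, f σ τ.1 ≫ g τ.1 ρ

infixr:80 " ⊚ " => starComp

/-- The identity of `A*(X)`. -/
noncomputable def diagId (F : X → A) (σ τ : X) : F σ ⟶ F τ :=
  if h : τ = σ then eqToHom (congrArg F h.symm) else 0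

variable {F G H K : X → A}

lemma diagId_self (σ : X) : diagId F σ σ = 𝟙 (F σ) := by
  simp [diagId]

lemma diagId_of_ne {σ τ : X} (h : τ ≠ σ) : diagId F σ τ = 0 := dif_neg h

lemma starComp_self (f : ∀ σ τ, F σ ⟶ G τ) (g : ∀ σ τ, G σ ⟶ H τ) (σ : X) :
    (f ⊚ g) σ σ = f σ σ ≫ g σ σ :=
  Fintype.sum_subsingleton (fun τ : Itv σ σ => f σ τ.1 ≫ g τ.1 σ) ⟨σ, le_rfl, le_rfl⟩

lemma starComp_of_not_le (f : ∀ σ τ, F σ ⟶ G τ) (g : ∀ σ τ, G σ ⟶ H τ) {σ ρ : X}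
    (h : ¬ρ ≤ σ) : (f ⊚ g) σ ρ = 0 := by
  have : IsEmpty (Itv ρ σ) := ⟨fun τ => h (τ.2.1.trans τ.2.2)⟩
  exact Fintype.sum_empty _

lemma diagId_starComp (g : ∀ σ τ, F σ ⟶ G τ) {σ ρ : X} (h : ρ ≤ σ) :
    (diagId F ⊚ g) σ ρ = g σ ρ := by
  rw [starComp, Fintype.sum_eq_single ⟨σ, h, le_rfl⟩]
  · simp [diagId_self]
  · intro τ hτ
    rw [diagId_of_ne (fun h' => hτ (Subtype.ext h')), zero_comp]

lemma starComp_diagId (f : ∀ σ τ, F σ ⟶ G τ) {σ ρ : X} (h : ρ ≤ σ) :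
    (f ⊚ diagId G) σ ρ = f σ ρ := by
  rw [starComp, Fintype.sum_eq_single ⟨ρ, le_rfl, h⟩]
  · simp [diagId_self]
  · intro τ hτ
    rw [diagId_of_ne (fun h' => hτ (Subtype.ext h'.symm)), comp_zero]

lemma starComp_assoc (f : ∀ σ τ, F σ ⟶ G τ) (g : ∀ σ τ, G σ ⟶ H τ) (h : ∀ σ τ, H σ ⟶ K τ)
    (σ ρ : X) : ((f ⊚ g) ⊚ h) σ ρ = (f ⊚ g ⊚ h) σ ρ := by
  simp only [starComp, sum_comp, comp_sum, Category.assoc]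
  rw [Finset.sum_sigma', Finset.sum_sigma']
  exact Finset.sum_bij'
    (fun x _ => ⟨⟨x.2.1, x.1.2.1.trans x.2.2.1, x.2.2.2⟩, ⟨x.1.1, x.1.2.1, x.2.2.1⟩⟩)
    (fun y _ => ⟨⟨y.2.1, y.2.2.1, y.2.2.2.trans y.1.2.2⟩, ⟨y.1.1, y.2.2.2, y.1.2.2⟩⟩)
    (fun _ _ => Finset.mem_univ _) (fun _ _ => Finset.mem_univ _)
    (fun _ _ => rfl) (fun _ _ => rfl) (fun _ _ => rfl)

end StarCategory

namespace GCx

variable (C : GCx X A)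

noncomputable def dOff (i j : ℤ) (σ τ : X) : C.ob i σ ⟶ C.ob j τ :=
  if τ = σ then 0 else C.d i j σ τ

lemma dOff_self (i j : ℤ) (σ : X) : C.dOff i j σ σ = 0 := if_pos rfl

lemma dOff_of_ne (i j : ℤ) {σ τ : X} (h : τ ≠ σ) : C.dOff i j σ τ = C.d i j σ τ := if_neg h

lemma d_starComp {H : X → A} (i j : ℤ) (g : ∀ σ τ, C.ob j σ ⟶ H τ) {σ ρ : X} (h : ρ ≤ σ) :
    (C.d i j ⊚ g) σ ρ = C.d i j σ σ ≫ g σ ρ + (C.dOff i j ⊚ g) σ ρ := by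
  let top : Itv ρ σ := ⟨σ, h, le_rfl⟩
  rw [starComp, starComp, Fintype.sum_eq_add_sum_compl top, Fintype.sum_eq_add_sum_compl top,
    dOff_self, zero_comp, zero_add]
  refine congrArg _ (Finset.sum_congr rfl fun τ hτ => ?_)
  rw [dOff_of_ne C i j fun h' => Finset.mem_compl.mp hτ (Finset.mem_singleton.mpr
    (Subtype.ext h'))]

lemma d_starComp_d (i : ℤ) (σ ρ : X) : (C.d (i + 1) i ⊚ C.d i (i - 1)) σ ρ = 0 := by
  have h := C.dsq (i + 1) σ ρ
  rw [show i + 1 - 1 = i by ring] at h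
  exact h

lemma d_self_comp_dOff (i : ℤ) {σ u : X} (h : u ≤ σ) :
    C.d (i + 1) i σ σ ≫ C.dOff i (i - 1) σ u = -(C.dOff (i + 1) i ⊚ C.d i (i - 1)) σ u := by
  by_cases hu : u = σ
  · subst hu
    rw [starComp_self, dOff_self, dOff_self, comp_zero, zero_comp, neg_zero]
  · rw [dOff_of_ne C _ _ hu]
    exact eq_neg_of_add_eq_zero_left
      ((C.d_starComp _ _ _ h).symm.trans (C.d_starComp_d i σ u))

lemma d_self_comp_dOff_starComp {H : X → A} (i : ℤ) (g : ∀ σ τ, C.ob (i - 1) σ ⟶ H τ)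
    (σ ρ : X) : C.d (i + 1) i σ σ ≫ (C.dOff i (i - 1) ⊚ g) σ ρ
      = -(C.dOff (i + 1) i ⊚ C.d i (i - 1) ⊚ g) σ ρ := by
  rw [← starComp_assoc, starComp, starComp, comp_sum, ← Finset.sum_neg_distrib]
  refine Finset.sum_congr rfl fun u _ => ?_
  rw [← Category.assoc, C.d_self_comp_dOff i u.2.2, neg_comp]

end GCx

section Chains

variable (C : GCx X A) (Pl : ∀ σ : X, LocalContraction C σ)

abbrev StrictChain (k : ℕ) (σ τ : X) : Type :=
  {c : Fin (k + 1) → Itv τ σ //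
    StrictMono (fun j => (c j).1) ∧ (c 0).1 = τ ∧ (c (Fin.last k)).1 = σ}

lemma StrictChain.isEmpty_of_card_le {k : ℕ} {σ τ : X} (h : Fintype.card (Itv τ σ) ≤ k) :
    IsEmpty (StrictChain k σ τ) := by
  refine ⟨fun c => ?_⟩
  have := Fintype.card_le_of_injective c.1 fun _ _ hab =>
    c.2.1.injective (congrArg Subtype.val hab)
  rw [Fintype.card_fin] at this
  omega

noncomputable def chainMap (i : ℤ) {k : ℕ} {σ τ : X} (v : Fin (k + 1) → X) (h₀ : v 0 = τ)
    (hₗ : v (Fin.last k) = σ) : C.ob i σ ⟶ C.ob (i + 1) τ :=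
  eqToHom (congrArg (C.ob i) hₗ.symm) ≫ chainComp C Pl i k v ≫
    eqToHom (congrArg (C.ob (i + 1)) h₀)

lemma chainMap_zero (i : ℤ) (σ : X) :
    chainMap C Pl i (fun _ : Fin 1 => σ) rfl rfl = (Pl σ).P i (i + 1) := by
  simp [chainMap, chainComp]

lemma chainMap_succ (i : ℤ) {k : ℕ} {σ τ : X} (v : Fin (k + 2) → X) (h₀ : v 0 = τ)
    (hₗ : v (Fin.last (k + 1)) = σ) :
    chainMap C Pl i v h₀ hₗ = (Pl σ).P i (i + 1) ≫
      C.d (i + 1) i σ (v (Fin.last k).castSucc) ≫ chainMap C Pl i (Fin.init v) h₀ rfl := by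
  subst hₗ
  simp only [chainMap, chainComp, Fin.init, Fin.castSucc_zero, eqToHom_refl, Category.assoc,
    Category.id_comp, eqToHom_naturality_assoc]
  exact congrArg (_ ≫ ·) (Category.assoc _ _ _)

/-- The summand of `globalP` indexed by the chain length `k`. -/
noncomputable def chainSum (i : ℤ) (k : ℕ) (σ τ : X) : C.ob i σ ⟶ C.ob (i + 1) τ :=
  ∑ c : StrictChain k σ τ,
    ((-1 : ℤ) ^ k) • chainMap C Pl i (fun j => (c.1 j).1) c.2.2.1 c.2.2.2

lemma chainSum_eq_zero_of_card_le (i : ℤ) {k : ℕ} {σ τ : X}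
    (h : Fintype.card (Itv τ σ) ≤ k) : chainSum C Pl i k σ τ = 0 := by
  have := StrictChain.isEmpty_of_card_le h
  exact Fintype.sum_empty _

lemma globalP_eq_sum_chainSum (i : ℤ) {σ τ : X} {N : ℕ} (hN : Fintype.card (Itv τ σ) ≤ N) :
    globalP C Pl i (i + 1) σ τ = ∑ k ∈ Finset.range N, chainSum C Pl i k σ τ := by
  have hzero : ∀ k ∈ Finset.range N, k ∉ Finset.range (Fintype.card (Itv τ σ)) →
      chainSum C Pl i k σ τ = 0 := fun k _ hk =>
    chainSum_eq_zero_of_card_le C Pl i (by simpa using hk)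
  rw [← Finset.sum_subset (Finset.range_subset_range.mpr hN) hzero]
  by_cases hle : τ ≤ σ
  · rw [globalP, dif_pos ⟨hle, rfl⟩, eqToHom_refl, Category.comp_id]
    rfl
  · have : IsEmpty (Itv τ σ) := ⟨fun u => hle (u.2.1.trans u.2.2)⟩
    rw [globalP, dif_neg fun h => hle h.1, Fintype.card_eq_zero, Finset.sum_range_zero]

lemma chainSum_zero (i : ℤ) (σ τ : X) :
    chainSum C Pl i 0 σ τ = (Pl σ).P i (i + 1) ≫ diagId (C.ob (i + 1)) σ τ := by
  by_cases h : τ = σ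
  · subst h
    rw [diagId_self, Category.comp_id, chainSum, Fintype.sum_subsingleton _
      ⟨fun _ => ⟨τ, le_rfl, le_rfl⟩, fun _ _ hab => absurd hab (by omega), rfl, rfl⟩]
    simp [chainMap_zero]
  · have : IsEmpty (StrictChain 0 σ τ) := ⟨fun c => h (c.2.2.1.symm.trans c.2.2.2)⟩
    rw [diagId_of_ne h, comp_zero]
    exact Fintype.sum_empty _

section Decomposition

variable {k : ℕ} {σ τ : X}

def chainInit (c : StrictChain (k + 1) σ τ) {u : X} (h : (c.1 (Fin.last k).castSucc).1 = u) :
    StrictChain k u τ :=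
  ⟨fun j => ⟨(c.1 j.castSucc).1, (c.1 j.castSucc).2.1,
      h ▸ c.2.1.monotone (Fin.castSucc_le_castSucc_iff.mpr (Fin.le_last j))⟩,
    fun _ _ hab => c.2.1 (Fin.castSucc_lt_castSucc_iff.mpr hab), c.2.2.1, h⟩

def chainSnoc (u : Itv τ σ) (hu : u.1 ≠ σ) (c : StrictChain k u.1 τ) :
    StrictChain (k + 1) σ τ :=
  ⟨Fin.snoc (fun j => ⟨(c.1 j).1, (c.1 j).2.1, (c.1 j).2.2.trans u.2.2⟩)
      ⟨σ, u.2.1.trans u.2.2, le_rfl⟩, by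
    have hmono : StrictMono fun j => (⟨(c.1 j).1, (c.1 j).2.1, (c.1 j).2.2.trans u.2.2⟩ :
        Itv τ σ) := c.2.1
    have := Fin.strictMono_insertNth_last hmono ⟨σ, u.2.1.trans u.2.2, le_rfl⟩
      (show (c.1 (Fin.last k)).1 < σ by rw [c.2.2.2]; exact lt_of_le_of_ne u.2.2 hu)
    rwa [Fin.insertNth_last'] at this, by simp [c.2.2.1], by simp⟩

def chainFiberEquiv (u : Itv τ σ) (hu : u.1 ≠ σ) :
    {c : StrictChain (k + 1) σ τ // c.1 (Fin.last k).castSucc = u} ≃ StrictChain k u.1 τ where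
  toFun c := chainInit c.1 (congrArg Subtype.val c.2)
  invFun c := ⟨chainSnoc u hu c, Subtype.ext (by simp [chainSnoc, c.2.2.2])⟩
  left_inv c := by
    obtain ⟨c, rfl⟩ := c
    refine Subtype.ext (Subtype.ext (funext fun j => Subtype.ext ?_))
    induction j using Fin.lastCases with
    | last => simp [chainSnoc, c.2.2.2]
    | cast j => simp [chainSnoc, chainInit]
  right_inv c := Subtype.ext (funext fun j => by simp [chainInit, chainSnoc])

end Decomposition

lemma chainSum_succ (i : ℤ) (k : ℕ) (σ τ : X) :
    chainSum C Pl i (k + 1) σ τ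
      = -((Pl σ).P i (i + 1) ≫ (C.dOff (i + 1) i ⊚ chainSum C Pl i k) σ τ) := by
  rw [chainSum, ← Fintype.sum_fiberwise (fun c : StrictChain (k + 1) σ τ =>
    c.1 (Fin.last k).castSucc), starComp, comp_sum, ← Finset.sum_neg_distrib]
  refine Finset.sum_congr rfl fun u _ => ?_
  by_cases hu : u.1 = σ
  · have : IsEmpty {c : StrictChain (k + 1) σ τ // c.1 (Fin.last k).castSucc = u} := by
      refine ⟨fun ⟨c, hc⟩ => ?_⟩
      have hlt : (c.1 (Fin.last k).castSucc).1 < (c.1 (Fin.last (k + 1))).1 :=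
        c.2.1 (Fin.castSucc_lt_last (Fin.last k))
      rw [hc, hu, c.2.2.2] at hlt
      exact lt_irrefl σ hlt
    rw [Fintype.sum_empty, hu, C.dOff_self, zero_comp, comp_zero, neg_zero]
  · rw [C.dOff_of_ne _ _ hu, chainSum, comp_sum, comp_sum, ← Finset.sum_neg_distrib]
    refine Fintype.sum_equiv (chainFiberEquiv u hu) _ _ fun ⟨c, hc⟩ => ?_
    subst hc
    rw [chainMap_succ C Pl i (fun j => (c.1 j).1) c.2.2.1 c.2.2.2, pow_succ, mul_neg_one,
      neg_smul, ← comp_zsmul, ← comp_zsmul]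
    rfl

lemma globalP_eq_P_comp (i j : ℤ) (σ τ : X) :
    globalP C Pl i j σ τ = (Pl σ).P i j ≫
      (diagId (C.ob j) σ τ - (C.dOff j i ⊚ globalP C Pl i j) σ τ) := by
  by_cases hj : j = i + 1
  · subst hj
    have hrest : ∑ k ∈ Finset.range (Fintype.card (Itv τ σ)),
        (C.dOff (i + 1) i ⊚ chainSum C Pl i k) σ τ
          = (C.dOff (i + 1) i ⊚ globalP C Pl i (i + 1)) σ τ := by
      simp only [starComp]
      rw [Finset.sum_comm]
      refine Finset.sum_congr rfl fun u _ => ?_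
      rw [← comp_sum, globalP_eq_sum_chainSum C Pl i (card_Itv_le u.2.2)]
    rw [globalP_eq_sum_chainSum C Pl i (Nat.le_succ _), Finset.sum_range_succ', chainSum_zero,
      ← hrest, comp_sub, comp_sum]
    simp only [chainSum_succ, Finset.sum_neg_distrib]
    abel
  · rw [globalP, dif_neg fun h => hj h.2, (Pl σ).shape i j hj, zero_comp]

lemma globalP_self (i j : ℤ) (σ : X) : globalP C Pl i j σ σ = (Pl σ).P i j := by
  rw [globalP_eq_P_comp, diagId_self, starComp_self, C.dOff_self, zero_comp, sub_zero,
    Category.comp_id]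

end Chains

section Contraction

variable (C : GCx X A) (Pl : ∀ σ : X, LocalContraction C σ)

lemma globalP_starComp_d (i : ℤ) {σ ρ : X} (h : ρ ≤ σ) :
    (globalP C Pl i (i + 1) ⊚ C.d (i + 1) i) σ ρ
      = (Pl σ).P i (i + 1) ≫ C.d (i + 1) i σ ρ
        - (Pl σ).P i (i + 1) ≫ (C.dOff (i + 1) i ⊚ globalP C Pl i (i + 1) ⊚ C.d (i + 1) i) σ ρ := by
  rw [← diagId_starComp (C.d (i + 1) i) h, ← comp_sub, ← starComp_assoc, starComp, starComp,
    starComp, ← Finset.sum_sub_distrib, comp_sum]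
  refine Finset.sum_congr rfl fun τ _ => ?_
  rw [globalP_eq_P_comp, Category.assoc, sub_comp]

lemma d_starComp_globalP_add_of_lt (i : ℤ) {σ ρ : X} (hle : ρ ≤ σ) (hne : ρ ≠ σ)
    (ih : ∀ w : Itv ρ σ, w.1 ≠ σ → (C.d i (i - 1) ⊚ globalP C Pl (i - 1) i) w.1 ρ
      + (globalP C Pl i (i + 1) ⊚ C.d (i + 1) i) w.1 ρ = diagId (C.ob i) w.1 ρ) :
    (C.d i (i - 1) ⊚ globalP C Pl (i - 1) i) σ ρ
      + (globalP C Pl i (i + 1) ⊚ C.d (i + 1) i) σ ρ = 0 := by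
  set Q := (C.dOff (i + 1) i ⊚ globalP C Pl i (i + 1) ⊚ C.d (i + 1) i) σ ρ with hQ
  have hih : (C.dOff (i + 1) i ⊚ C.d i (i - 1) ⊚ globalP C Pl (i - 1) i) σ ρ
      = C.d (i + 1) i σ ρ - Q := by
    rw [← C.dOff_of_ne _ _ hne, ← starComp_diagId (C.dOff (i + 1) i) hle, hQ,
      starComp.eq_1 (C.dOff (i + 1) i), starComp.eq_1 (C.dOff (i + 1) i),
      starComp.eq_1 (C.dOff (i + 1) i), ← Finset.sum_sub_distrib]
    refine Finset.sum_congr rfl fun w _ => ?_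
    by_cases hw : w.1 = σ
    · rw [hw, C.dOff_self, zero_comp, zero_comp, zero_comp, sub_zero]
    · rw [← comp_sub, ← ih w hw, add_sub_cancel_right]
  have hP := globalP_eq_P_comp C Pl (i - 1) i σ ρ
  rw [diagId_of_ne hne, zero_sub, comp_neg] at hP
  have hdP : (C.d i (i - 1) ⊚ globalP C Pl (i - 1) i) σ ρ
      = -((Pl σ).P i (i + 1) ≫ C.d (i + 1) i σ ρ) + (Pl σ).P i (i + 1) ≫ Q := by
    calc (C.d i (i - 1) ⊚ globalP C Pl (i - 1) i) σ ρ
        = (𝟙 _ - C.d i (i - 1) σ σ ≫ (Pl σ).P (i - 1) i)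
            ≫ (C.dOff i (i - 1) ⊚ globalP C Pl (i - 1) i) σ ρ := by
          rw [C.d_starComp _ _ _ hle, hP, comp_neg, sub_comp, Category.id_comp, Category.assoc]
          abel
      _ = (Pl σ).P i (i + 1) ≫ C.d (i + 1) i σ σ
            ≫ (C.dOff i (i - 1) ⊚ globalP C Pl (i - 1) i) σ ρ := by
          rw [← (Pl σ).contr i, add_sub_cancel_left, Category.assoc]
      _ = _ := by
          rw [C.d_self_comp_dOff_starComp, hih, comp_neg, comp_sub]
          abel
  rw [hdP, globalP_starComp_d C Pl i hle]
  abel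

theorem d_starComp_globalP_add (i : ℤ) (σ ρ : X) :
    (C.d i (i - 1) ⊚ globalP C Pl (i - 1) i) σ ρ
      + (globalP C Pl i (i + 1) ⊚ C.d (i + 1) i) σ ρ = diagId (C.ob i) σ ρ := by
  by_cases hρσ : ρ = σ
  · subst hρσ
    rw [starComp_self, starComp_self, globalP_self, globalP_self, (Pl ρ).contr, diagId_self]
  by_cases hle : ρ ≤ σ
  · rw [diagId_of_ne hρσ]
    exact d_starComp_globalP_add_of_lt C Pl i hle hρσ fun w _ => d_starComp_globalP_add i w.1 ρ
  · rw [starComp_of_not_le _ _ hle, starComp_of_not_le _ _ hle, diagId_of_ne hρσ, add_zero]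
termination_by Fintype.card (Itv ρ σ)
decreasing_by exact card_Itv_lt w.2.1 w.2.2 ‹_›

end Contraction

/-- if every local complex `C(σ)` admits a chain contraction `P_σ` in `A`,
then the map `P_{τ,σ} = Σ_i Σ_{τ=σ₀<⋯<σ_i=σ} (−1)^i P_{σ₀} d_{σ₀σ₁} ⋯ d_{σ_{i-1}σ_i} P_{σ_i}`
is a chain contraction of `C` in `A*(X)`: `dP + Pd` is the identity on the diagonal and
zero off the diagonal. -/
theorem stmt3 (C : GCx X A) (Pl : ∀ σ : X, LocalContraction C σ) :
    ∀ (i : ℤ) (σ ρ : X),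
      (∑ τ : {τ : X // ρ ≤ τ ∧ τ ≤ σ}, C.d i (i - 1) σ τ.1 ≫ globalP C Pl (i - 1) i τ.1 ρ)
        + (∑ τ : {τ : X // ρ ≤ τ ∧ τ ≤ σ}, globalP C Pl i (i + 1) σ τ.1 ≫ C.d (i + 1) i τ.1 ρ)
      = if h : ρ = σ then eqToHom (by rw [h]) else 0 :=
  d_starComp_globalP_add C Pl
end

section
/- Let A be an additive category, X a locally finite simplicial complex, and f: C → D a chain map of finite chain complexes in A*(X). Then f is a chain equivalence in A*(X) if and only if each diagonal component f_{σ,σ}: C(σ) → D(σ) is a chain equivalence in A. -/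
/-!
A chain map `f` is a chain equivalence as soon as its mapping cone is contractible, and the cone
is built in the category `FormalBiprod A` of formal biproducts of two objects of `A`. Restricting
a chain equivalence to the diagonal gives the local ones. Conversely, local homotopy inverses
give contractions `s_σ` of the diagonal entries of the cone. Since morphisms of `A*(X)` are
triangular, `ν = 1 - (d s + s d)` vanishes on the diagonal and is therefore nilpotent on each
(finite) interval `[ρ, σ]`; as `ν` commutes with `d`, the Neumann series `(∑ₖ νᵏ) s` is a global
contraction of the cone. Its matrix entries are a homotopy inverse of `f` and the two homotopies.
-/

open CategoryTheory

attribute [local instance] Classical.propDecidable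

variable {X : Type} [PartialOrder X] [∀ ρ σ : X, Fintype {τ : X // ρ ≤ τ ∧ τ ≤ σ}]
variable {A : Type} [Category A] [Preadditive A]

/-- A chain map in `A*(X)`: components `f i σ τ : C_i(σ) ⟶ D_i(τ)` supported on
`τ ≤ σ`, commuting with the differentials componentwise. -/
structure HomGC (C D : GCx X A) where
  f : ∀ (i : ℤ) (σ τ : X), C.ob i σ ⟶ D.ob i τ
  shape : ∀ (i : ℤ) (σ τ : X), ¬τ ≤ σ → f i σ τ = 0
  comm : ∀ (i : ℤ) (σ ρ : X),
    (∑ τ : {τ : X // ρ ≤ τ ∧ τ ≤ σ}, C.d i (i - 1) σ τ.1 ≫ f (i - 1) τ.1 ρ) =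
    (∑ τ : {τ : X // ρ ≤ τ ∧ τ ≤ σ}, f i σ τ.1 ≫ D.d i (i - 1) τ.1 ρ)

/-- `f` is a chain equivalence in `A*(X)`: there is a chain homotopy inverse `g` in
`A*(X)`, with chain homotopies (supported on `τ ≤ σ`, of degree `+1`)
`dP + Pd = id − g∘f` and `dQ + Qd = id − f∘g`, all componentwise. -/
def IsEquivGC (C D : GCx X A) (f : HomGC C D) : Prop :=
  ∃ g : HomGC D C,
    (∃ P : ∀ (i j : ℤ) (σ τ : X), C.ob i σ ⟶ C.ob j τ,
      (∀ (i j : ℤ) (σ τ : X), ¬(τ ≤ σ ∧ j = i + 1) → P i j σ τ = 0) ∧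
      ∀ (i : ℤ) (σ ρ : X),
        (∑ τ : {τ : X // ρ ≤ τ ∧ τ ≤ σ}, C.d i (i - 1) σ τ.1 ≫ P (i - 1) i τ.1 ρ)
          + (∑ τ : {τ : X // ρ ≤ τ ∧ τ ≤ σ}, P i (i + 1) σ τ.1 ≫ C.d (i + 1) i τ.1 ρ)
        = (if h : ρ = σ then eqToHom (by rw [h]) else 0)
          - (∑ τ : {τ : X // ρ ≤ τ ∧ τ ≤ σ}, f.f i σ τ.1 ≫ g.f i τ.1 ρ)) ∧
    (∃ Q : ∀ (i j : ℤ) (σ τ : X), D.ob i σ ⟶ D.ob j τ,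
      (∀ (i j : ℤ) (σ τ : X), ¬(τ ≤ σ ∧ j = i + 1) → Q i j σ τ = 0) ∧
      ∀ (i : ℤ) (σ ρ : X),
        (∑ τ : {τ : X // ρ ≤ τ ∧ τ ≤ σ}, D.d i (i - 1) σ τ.1 ≫ Q (i - 1) i τ.1 ρ)
          + (∑ τ : {τ : X // ρ ≤ τ ∧ τ ≤ σ}, Q i (i + 1) σ τ.1 ≫ D.d (i + 1) i τ.1 ρ)
        = (if h : ρ = σ then eqToHom (by rw [h]) else 0)
          - (∑ τ : {τ : X // ρ ≤ τ ∧ τ ≤ σ}, g.f i σ τ.1 ≫ f.f i τ.1 ρ))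

/-- The diagonal component `f_{σ,σ} : C(σ) → D(σ)` is a chain equivalence in `A`. -/
def IsLocalEquiv (C D : GCx X A) (f : HomGC C D) (σ : X) : Prop :=
  ∃ g : ∀ i : ℤ, D.ob i σ ⟶ C.ob i σ,
    (∀ i : ℤ, D.d i (i - 1) σ σ ≫ g (i - 1) = g i ≫ C.d i (i - 1) σ σ) ∧
    (∃ P : ∀ i j : ℤ, C.ob i σ ⟶ C.ob j σ,
      ∀ i : ℤ, C.d i (i - 1) σ σ ≫ P (i - 1) i + P i (i + 1) ≫ C.d (i + 1) i σ σ
        = 𝟙 (C.ob i σ) - f.f i σ σ ≫ g i) ∧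
    (∃ Q : ∀ i j : ℤ, D.ob i σ ⟶ D.ob j σ,
      ∀ i : ℤ, D.d i (i - 1) σ σ ≫ Q (i - 1) i + Q i (i + 1) ≫ D.d (i + 1) i σ σ
        = 𝟙 (D.ob i σ) - g i ≫ f.f i σ σ)

open CategoryTheory.Limits

section IndexTransport

variable {𝒞 ι κ : Type*} [Category 𝒞]

lemma comp_eqToHom_index {F : ι → 𝒞} {Y : 𝒞} (u : ∀ k, Y ⟶ F k) {k k' : ι} (h : k = k') :
    u k ≫ eqToHom (congrArg F h) = u k' := by
  subst h
  simp

lemma eqToHom_comp_index {F : ι → 𝒞} {Y : 𝒞} (u : ∀ k, F k ⟶ Y) {k k' : ι} (h : k = k') :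
    eqToHom (congrArg F h) ≫ u k' = u k := by
  subst h
  simp

lemma eqToHom_comp_comp_eqToHom_index {F : ι → 𝒞} {G : κ → 𝒞}
    (u : ∀ k l, F k ⟶ G l) {k k' : ι} {l l' : κ} (hk : k = k') (hl : l = l') :
    eqToHom (congrArg F hk) ≫ u k' l' ≫ eqToHom (congrArg G hl.symm) = u k l := by
  subst hk hl
  simp

end IndexTransport

abbrev Segment (ρ σ : X) : Type := {τ : X // ρ ≤ τ ∧ τ ≤ σ}

-- Families `u σ τ : F σ ⟶ G τ` supported on `τ ≤ σ` are the morphisms of `A*(X)`, and `⋆` is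
-- their composition (in diagrammatic order).
def conv {F G H : X → A} (u : ∀ σ τ, F σ ⟶ G τ) (v : ∀ τ ρ, G τ ⟶ H ρ) (σ ρ : X) :
    F σ ⟶ H ρ :=
  ∑ τ : Segment ρ σ, u σ τ.1 ≫ v τ.1 ρ

infixl:70 " ⋆ " => conv

noncomputable def delta (F : X → A) (σ τ : X) : F σ ⟶ F τ :=
  if h : τ = σ then eqToHom (by rw [h]) else 0

noncomputable def diagonal {F G : X → A} (t : ∀ σ, F σ ⟶ G σ) (σ τ : X) : F σ ⟶ G τ :=
  if h : τ = σ then t σ ≫ eqToHom (by rw [h]) else 0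

def IsSupported {F G : X → A} (u : ∀ σ τ, F σ ⟶ G τ) : Prop :=
  ∀ σ τ, ¬τ ≤ σ → u σ τ = 0

section Convolution

variable {F G H K : X → A}

lemma conv_apply_of_not_le (u : ∀ σ τ, F σ ⟶ G τ) (v : ∀ τ ρ, G τ ⟶ H ρ) {σ ρ : X}
    (h : ¬ρ ≤ σ) : (u ⋆ v) σ ρ = 0 :=
  have : IsEmpty (Segment ρ σ) := ⟨fun τ => h (τ.2.1.trans τ.2.2)⟩
  Fintype.sum_empty _

lemma isSupported_conv (u : ∀ σ τ, F σ ⟶ G τ) (v : ∀ τ ρ, G τ ⟶ H ρ) : IsSupported (u ⋆ v) :=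
  fun _ _ => conv_apply_of_not_le u v

lemma conv_apply_self (u : ∀ σ τ, F σ ⟶ G τ) (v : ∀ τ ρ, G τ ⟶ H ρ) (σ : X) :
    (u ⋆ v) σ σ = u σ σ ≫ v σ σ :=
  Fintype.sum_eq_single (f := fun τ : Segment σ σ => u σ τ.1 ≫ v τ.1 σ) ⟨σ, le_rfl, le_rfl⟩
    fun τ hτ => absurd (Subtype.ext (le_antisymm τ.2.2 τ.2.1)) hτ

omit [PartialOrder X] [∀ ρ σ : X, Fintype {τ : X // ρ ≤ τ ∧ τ ≤ σ}] in
@[simp] lemma delta_apply_self (σ : X) : delta F σ σ = 𝟙 (F σ) := by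
  simp [delta]

omit [PartialOrder X] [∀ ρ σ : X, Fintype {τ : X // ρ ≤ τ ∧ τ ≤ σ}] in
@[simp] lemma diagonal_apply_self (t : ∀ σ, F σ ⟶ G σ) (σ : X) : diagonal t σ σ = t σ := by
  simp [diagonal]

omit [PartialOrder X] [∀ ρ σ : X, Fintype {τ : X // ρ ≤ τ ∧ τ ≤ σ}] in
lemma delta_apply_of_ne {σ τ : X} (h : τ ≠ σ) : delta F σ τ = 0 := dif_neg h

omit [∀ ρ σ : X, Fintype {τ : X // ρ ≤ τ ∧ τ ≤ σ}] in
lemma isSupported_delta : IsSupported (delta F) :=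
  fun _ _ h => delta_apply_of_ne fun e => h e.le

lemma conv_delta {u : ∀ σ τ, F σ ⟶ G τ} (hu : IsSupported u) : u ⋆ delta G = u := by
  ext σ ρ
  by_cases h : ρ ≤ σ
  · refine (Fintype.sum_eq_single ⟨ρ, le_rfl, h⟩ fun τ hτ => ?_).trans (by simp)
    rw [delta_apply_of_ne fun e => hτ (Subtype.ext e.symm), comp_zero]
  · rw [conv_apply_of_not_le _ _ h, hu _ _ h]

lemma delta_conv {u : ∀ σ τ, F σ ⟶ G τ} (hu : IsSupported u) : delta F ⋆ u = u := by
  ext σ ρ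
  by_cases h : ρ ≤ σ
  · refine (Fintype.sum_eq_single ⟨σ, h, le_rfl⟩ fun τ hτ => ?_).trans (by simp)
    rw [delta_apply_of_ne fun e => hτ (Subtype.ext e), zero_comp]
  · rw [conv_apply_of_not_le _ _ h, hu _ _ h]

lemma sum_segment_sum_segment_comm {M : Type*} [AddCommMonoid M] (ρ σ : X) (φ : X → X → M) :
    ∑ π : Segment ρ σ, ∑ τ : Segment π.1 σ, φ τ.1 π.1 =
      ∑ τ : Segment ρ σ, ∑ π : Segment ρ τ.1, φ τ.1 π.1 := by
  let e : (Σ π : Segment ρ σ, Segment π.1 σ) ≃ Σ τ : Segment ρ σ, Segment ρ τ.1 :=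
    { toFun := fun p => ⟨⟨p.2.1, p.1.2.1.trans p.2.2.1, p.2.2.2⟩, ⟨p.1.1, p.1.2.1, p.2.2.1⟩⟩
      invFun := fun p => ⟨⟨p.2.1, p.2.2.1, p.2.2.2.trans p.1.2.2⟩, ⟨p.1.1, p.2.2.2, p.1.2.2⟩⟩ }
  rw [← Fintype.sum_sigma', ← Fintype.sum_sigma']
  exact Fintype.sum_equiv e _ _ fun _ => rfl

lemma conv_assoc (u : ∀ σ τ, F σ ⟶ G τ) (v : ∀ τ π, G τ ⟶ H π) (w : ∀ π ρ, H π ⟶ K ρ) :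
    u ⋆ v ⋆ w = u ⋆ (v ⋆ w) := by
  ext σ ρ
  simp only [conv, Preadditive.sum_comp, Preadditive.comp_sum, Category.assoc]
  exact sum_segment_sum_segment_comm ρ σ fun τ π => u σ τ ≫ v τ π ≫ w π ρ

lemma conv_add (u : ∀ σ τ, F σ ⟶ G τ) (v v' : ∀ τ ρ, G τ ⟶ H ρ) :
    u ⋆ (v + v') = u ⋆ v + u ⋆ v' := by
  ext σ ρ
  simp [conv, Finset.sum_add_distrib]

lemma add_conv (u u' : ∀ σ τ, F σ ⟶ G τ) (v : ∀ τ ρ, G τ ⟶ H ρ) :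
    (u + u') ⋆ v = u ⋆ v + u' ⋆ v := by
  ext σ ρ
  simp [conv, Finset.sum_add_distrib]

lemma conv_sub (u : ∀ σ τ, F σ ⟶ G τ) (v v' : ∀ τ ρ, G τ ⟶ H ρ) :
    u ⋆ (v - v') = u ⋆ v - u ⋆ v' := by
  ext σ ρ
  simp [conv, Finset.sum_sub_distrib]

lemma sub_conv (u u' : ∀ σ τ, F σ ⟶ G τ) (v : ∀ τ ρ, G τ ⟶ H ρ) :
    (u - u') ⋆ v = u ⋆ v - u' ⋆ v := by
  ext σ ρ
  simp [conv, Finset.sum_sub_distrib]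

lemma conv_neg (u : ∀ σ τ, F σ ⟶ G τ) (v : ∀ τ ρ, G τ ⟶ H ρ) : u ⋆ -v = -(u ⋆ v) := by
  ext σ ρ
  simp [conv]

lemma neg_conv (u : ∀ σ τ, F σ ⟶ G τ) (v : ∀ τ ρ, G τ ⟶ H ρ) : -u ⋆ v = -(u ⋆ v) := by
  ext σ ρ
  simp [conv]

lemma comp_conv_eq_conv_comp {G' : X → A} (u : ∀ σ τ, F σ ⟶ G τ) (t : ∀ τ, G τ ⟶ G' τ)
    (v : ∀ τ ρ, G' τ ⟶ H ρ) : (fun σ τ => u σ τ ≫ t τ) ⋆ v = u ⋆ fun τ ρ => t τ ≫ v τ ρ := by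
  ext σ ρ
  simp [conv]

lemma conv_zero (u : ∀ σ τ, F σ ⟶ G τ) : u ⋆ (0 : ∀ τ ρ, G τ ⟶ H ρ) = 0 := by
  ext σ ρ
  simp [conv]

lemma zero_conv (v : ∀ τ ρ, G τ ⟶ H ρ) : (0 : ∀ σ τ, F σ ⟶ G τ) ⋆ v = 0 := by
  ext σ ρ
  simp [conv]

end Convolution

section Neumann

variable {F G : X → A}

lemma card_segment_le_left {ρ τ σ : X} (h : ρ ≤ τ) :
    Fintype.card (Segment τ σ) ≤ Fintype.card (Segment ρ σ) :=
  Fintype.card_le_of_injective (fun x => ⟨x.1, h.trans x.2.1, x.2.2⟩)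
    fun _ _ hxy => Subtype.ext (congrArg Subtype.val hxy :)

lemma card_segment_le_right {ρ τ σ : X} (h : τ ≤ σ) :
    Fintype.card (Segment ρ τ) ≤ Fintype.card (Segment ρ σ) :=
  Fintype.card_le_of_injective (fun x => ⟨x.1, x.2.1, x.2.2.trans h⟩)
    fun _ _ hxy => Subtype.ext (congrArg Subtype.val hxy :)

lemma card_segment_lt_left {ρ τ σ : X} (hρτ : ρ ≤ τ) (hne : τ ≠ ρ) (hρσ : ρ ≤ σ) :
    Fintype.card (Segment τ σ) < Fintype.card (Segment ρ σ) :=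
  Fintype.card_lt_of_injective_of_notMem (fun x => ⟨x.1, hρτ.trans x.2.1, x.2.2⟩)
    (fun _ _ hxy => Subtype.ext (congrArg Subtype.val hxy :)) (b := ⟨ρ, le_rfl, hρσ⟩)
    fun ⟨x, hx⟩ => hne (le_antisymm (le_of_le_of_eq x.2.1 (congrArg Subtype.val hx)) hρτ)

noncomputable def convPow (u : ∀ σ τ, F σ ⟶ F τ) : ℕ → ∀ σ τ, F σ ⟶ F τ
  | 0 => delta F
  | k + 1 => convPow u k ⋆ u

lemma isSupported_convPow (u : ∀ σ τ, F σ ⟶ F τ) : ∀ k, IsSupported (convPow u k)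
  | 0 => isSupported_delta
  | _ + 1 => isSupported_conv _ _

lemma conv_convPow_comm {d : ∀ σ τ, F σ ⟶ G τ} {v : ∀ σ τ, G σ ⟶ G τ} {w : ∀ σ τ, F σ ⟶ F τ}
    (hd : IsSupported d) (h : d ⋆ v = w ⋆ d) : ∀ k, d ⋆ convPow v k = convPow w k ⋆ d
  | 0 => by rw [convPow, convPow, conv_delta hd, delta_conv hd]
  | k + 1 => by
    rw [convPow, convPow, ← conv_assoc, conv_convPow_comm hd h k, conv_assoc, h, conv_assoc]

lemma convPow_apply_eq_zero {u : ∀ σ τ, F σ ⟶ F τ} (hu : ∀ σ, u σ σ = 0) :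
    ∀ (k : ℕ) {σ ρ : X}, Fintype.card (Segment ρ σ) ≤ k → convPow u k σ ρ = 0
  | 0, σ, ρ, h => delta_apply_of_ne fun e => by
    subst e
    exact (Fintype.card_pos_iff.2 ⟨⟨ρ, le_rfl, le_rfl⟩⟩).ne' (Nat.le_zero.1 h)
  | k + 1, σ, ρ, h => Finset.sum_eq_zero fun τ _ => by
    by_cases hτ : τ.1 = ρ
    · rw [hτ, hu, comp_zero]
    · rw [convPow_apply_eq_zero hu k
        (Nat.lt_succ_iff.1 ((card_segment_lt_left τ.2.1 hτ (τ.2.1.trans τ.2.2)).trans_le h)),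
        zero_comp]

noncomputable def neumannSeries (u : ∀ σ τ, F σ ⟶ F τ) (σ ρ : X) : F σ ⟶ F ρ :=
  ∑ᶠ k, convPow u k σ ρ

lemma neumannSeries_apply {u : ∀ σ τ, F σ ⟶ F τ} (hu : ∀ σ, u σ σ = 0) {σ ρ : X} {M : ℕ}
    (h : Fintype.card (Segment ρ σ) ≤ M) :
    neumannSeries u σ ρ = ∑ k ∈ Finset.range M, convPow u k σ ρ :=
  finsum_eq_sum_of_support_subset _ fun k hk => by
    by_contra hkM
    exact hk (convPow_apply_eq_zero hu k (h.trans (by simpa using hkM)))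

lemma isSupported_neumannSeries (u : ∀ σ τ, F σ ⟶ F τ) : IsSupported (neumannSeries u) :=
  fun _ _ h => finsum_eq_zero_of_forall_eq_zero fun k => isSupported_convPow u k _ _ h

lemma conv_neumannSeries_apply (d : ∀ σ τ, F σ ⟶ G τ) {v : ∀ σ τ, G σ ⟶ G τ}
    (hv : ∀ σ, v σ σ = 0) (σ ρ : X) :
    (d ⋆ neumannSeries v) σ ρ =
      ∑ k ∈ Finset.range (Fintype.card (Segment ρ σ)), (d ⋆ convPow v k) σ ρ := by
  simp only [conv]
  rw [Finset.sum_comm]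
  refine Finset.sum_congr rfl fun τ _ => ?_
  rw [neumannSeries_apply hv (card_segment_le_right τ.2.2), Preadditive.comp_sum]

lemma neumannSeries_conv_apply {w : ∀ σ τ, F σ ⟶ F τ} (hw : ∀ σ, w σ σ = 0)
    (d : ∀ σ τ, F σ ⟶ G τ) (σ ρ : X) :
    (neumannSeries w ⋆ d) σ ρ =
      ∑ k ∈ Finset.range (Fintype.card (Segment ρ σ)), (convPow w k ⋆ d) σ ρ := by
  simp only [conv]
  rw [Finset.sum_comm]
  refine Finset.sum_congr rfl fun τ _ => ?_
  rw [neumannSeries_apply hw (card_segment_le_left τ.2.1), Preadditive.sum_comp]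

lemma conv_neumannSeries_comm {d : ∀ σ τ, F σ ⟶ G τ} {v : ∀ σ τ, G σ ⟶ G τ}
    {w : ∀ σ τ, F σ ⟶ F τ} (hd : IsSupported d) (hv : ∀ σ, v σ σ = 0) (hw : ∀ σ, w σ σ = 0)
    (h : d ⋆ v = w ⋆ d) : d ⋆ neumannSeries v = neumannSeries w ⋆ d := by
  ext σ ρ
  rw [conv_neumannSeries_apply d hv, neumannSeries_conv_apply hw d]
  exact Finset.sum_congr rfl fun k _ => by rw [conv_convPow_comm hd h k]

lemma neumannSeries_conv_sub {u : ∀ σ τ, F σ ⟶ F τ} (hu : ∀ σ, u σ σ = 0) :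
    neumannSeries u ⋆ (delta F - u) = delta F := by
  rw [conv_sub, conv_delta (isSupported_neumannSeries u)]
  ext σ ρ
  rw [Pi.sub_apply, Pi.sub_apply, neumannSeries_conv_apply hu, neumannSeries_apply hu le_rfl,
    ← Finset.sum_sub_distrib]
  exact (Finset.sum_range_sub' (fun k => convPow u k σ ρ) _).trans
    (by rw [convPow_apply_eq_zero hu _ le_rfl, sub_zero]; rfl)

end Neumann

namespace GCx

variable (E : GCx X A)

lemma isSupported_d (i j : ℤ) : IsSupported (E.d i j) :=
  fun σ τ h => E.shape i j σ τ fun h' => h h'.1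

lemma d_conv_d (i : ℤ) : E.d i (i - 1) ⋆ E.d (i - 1) (i - 1 - 1) = 0 :=
  funext₂ (E.dsq i)

lemma d_succ_conv_d (i : ℤ) : E.d (i + 1) i ⋆ E.d i (i - 1) = 0 := by
  have h := E.d_conv_d (i + 1)
  rwa [Int.add_sub_cancel] at h

def nullHomotopicMap (h : ∀ i j σ τ, E.ob i σ ⟶ E.ob j τ) (i : ℤ) :
    ∀ σ τ, E.ob i σ ⟶ E.ob i τ :=
  E.d i (i - 1) ⋆ h (i - 1) i + h i (i + 1) ⋆ E.d (i + 1) i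

def IsContraction (Γ : ∀ i j σ τ, E.ob i σ ⟶ E.ob j τ) : Prop :=
  (∀ i j σ τ, ¬(τ ≤ σ ∧ j = i + 1) → Γ i j σ τ = 0) ∧
    ∀ i, E.nullHomotopicMap Γ i = delta (E.ob i)

lemma d_conv_nullHomotopicMap (h : ∀ i j σ τ, E.ob i σ ⟶ E.ob j τ) (i : ℤ) :
    E.d i (i - 1) ⋆ E.nullHomotopicMap h (i - 1) = E.nullHomotopicMap h i ⋆ E.d i (i - 1) := by
  rw [nullHomotopicMap, nullHomotopicMap, conv_add, add_conv, ← conv_assoc, d_conv_d, zero_conv,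
    zero_add, conv_assoc, conv_assoc, d_succ_conv_d, conv_zero, add_zero,
    congrArg (fun k => h (i - 1) k ⋆ E.d k (i - 1)) (Int.sub_add_cancel i 1)]

theorem exists_isContraction (h : ∀ i j σ τ, E.ob i σ ⟶ E.ob j τ)
    (hh : ∀ i σ, E.nullHomotopicMap h i σ σ = 𝟙 (E.ob i σ)) : ∃ Γ, E.IsContraction Γ := by
  let ν i := delta (E.ob i) - E.nullHomotopicMap h i
  have hν : ∀ i σ, ν i σ σ = 0 := fun i σ => by simp [ν, hh]
  have hdν : ∀ i, E.d i (i - 1) ⋆ ν (i - 1) = ν i ⋆ E.d i (i - 1) := fun i => by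
    simp only [ν, conv_sub, sub_conv, conv_delta (E.isSupported_d _ _),
      delta_conv (E.isSupported_d _ _), d_conv_nullHomotopicMap]
  refine ⟨fun i j => if j = i + 1 then neumannSeries (ν i) ⋆ h i j else 0,
    fun i j σ τ hστ => ?_, fun i => ?_⟩
  · dsimp only
    split_ifs with hj
    · exact conv_apply_of_not_le _ _ fun hτσ => hστ ⟨hτσ, hj⟩
    · rfl
  · dsimp only [nullHomotopicMap]
    rw [if_pos (Int.sub_add_cancel i 1).symm, if_pos rfl, ← conv_assoc,
      conv_neumannSeries_comm (E.isSupported_d _ _) (hν _) (hν _) (hdν i), conv_assoc, conv_assoc,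
      ← conv_add]
    -- `d h + h d = 1 - ν`
    exact (congrArg _ (sub_sub_cancel _ _).symm).trans (neumannSeries_conv_sub (hν i))

theorem exists_isContraction_of_local (s : ∀ σ i j, E.ob i σ ⟶ E.ob j σ)
    (hs : ∀ σ i, E.d i (i - 1) σ σ ≫ s σ (i - 1) i + s σ i (i + 1) ≫ E.d (i + 1) i σ σ = 𝟙 _) :
    ∃ Γ, E.IsContraction Γ :=
  E.exists_isContraction (fun i j => diagonal fun σ => s σ i j) fun i σ => by
    simp only [nullHomotopicMap, Pi.add_apply, conv_apply_self, diagonal_apply_self, hs]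

end GCx

-- Pairs `(fst, snd)` standing for `fst ⊞ snd`, with 2 × 2 matrices as morphisms; `A` need not
-- have biproducts.
variable (A) in
structure FormalBiprod where
  fst : A
  snd : A

namespace FormalBiprod

@[ext] structure Hom (M N : FormalBiprod A) where
  m11 : M.fst ⟶ N.fst
  m12 : M.fst ⟶ N.snd
  m21 : M.snd ⟶ N.fst
  m22 : M.snd ⟶ N.snd

@[simps]
instance : Category (FormalBiprod A) where
  Hom := Hom
  id M := ⟨𝟙 _, 0, 0, 𝟙 _⟩
  comp u v := ⟨u.m11 ≫ v.m11 + u.m12 ≫ v.m21, u.m11 ≫ v.m12 + u.m12 ≫ v.m22,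
    u.m21 ≫ v.m11 + u.m22 ≫ v.m21, u.m21 ≫ v.m12 + u.m22 ≫ v.m22⟩
  id_comp _ := by ext <;> simp
  comp_id _ := by ext <;> simp
  assoc _ _ _ := by ext <;> simp only [Preadditive.add_comp, Preadditive.comp_add,
    Category.assoc] <;> abel

variable {M N : FormalBiprod A}

@[ext] lemma hom_ext {u v : M ⟶ N} (h11 : u.m11 = v.m11) (h12 : u.m12 = v.m12)
    (h21 : u.m21 = v.m21) (h22 : u.m22 = v.m22) : u = v :=
  Hom.ext h11 h12 h21 h22

def homEquiv (M N : FormalBiprod A) :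
    (M ⟶ N) ≃ (M.fst ⟶ N.fst) × (M.fst ⟶ N.snd) × (M.snd ⟶ N.fst) × (M.snd ⟶ N.snd) where
  toFun u := (u.m11, u.m12, u.m21, u.m22)
  invFun p := ⟨p.1, p.2.1, p.2.2.1, p.2.2.2⟩
  left_inv _ := rfl
  right_inv _ := rfl

instance : AddCommGroup (M ⟶ N) := (homEquiv M N).addCommGroup

@[simp] lemma add_m11 (u v : M ⟶ N) : (u + v).m11 = u.m11 + v.m11 := rfl
@[simp] lemma add_m12 (u v : M ⟶ N) : (u + v).m12 = u.m12 + v.m12 := rfl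
@[simp] lemma add_m21 (u v : M ⟶ N) : (u + v).m21 = u.m21 + v.m21 := rfl
@[simp] lemma add_m22 (u v : M ⟶ N) : (u + v).m22 = u.m22 + v.m22 := rfl
@[simp] lemma zero_m11 : (0 : M ⟶ N).m11 = 0 := rfl
@[simp] lemma zero_m21 : (0 : M ⟶ N).m21 = 0 := rfl
@[simp] lemma zero_m22 : (0 : M ⟶ N).m22 = 0 := rfl

section Sum

variable {ι : Type*} (s : Finset ι) (u : ι → (M ⟶ N))

@[simp] lemma sum_m11 : (∑ k ∈ s, u k).m11 = ∑ k ∈ s, (u k).m11 :=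
  map_sum (AddMonoidHom.mk' (fun w : M ⟶ N => w.m11) fun _ _ => rfl) u s
@[simp] lemma sum_m12 : (∑ k ∈ s, u k).m12 = ∑ k ∈ s, (u k).m12 :=
  map_sum (AddMonoidHom.mk' (fun w : M ⟶ N => w.m12) fun _ _ => rfl) u s
@[simp] lemma sum_m21 : (∑ k ∈ s, u k).m21 = ∑ k ∈ s, (u k).m21 :=
  map_sum (AddMonoidHom.mk' (fun w : M ⟶ N => w.m21) fun _ _ => rfl) u s
@[simp] lemma sum_m22 : (∑ k ∈ s, u k).m22 = ∑ k ∈ s, (u k).m22 :=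
  map_sum (AddMonoidHom.mk' (fun w : M ⟶ N => w.m22) fun _ _ => rfl) u s

end Sum

instance : Preadditive (FormalBiprod A) where
  add_comp _ _ _ _ _ _ := by ext <;> simp only [comp_m11, comp_m12, comp_m21, comp_m22, add_m11,
    add_m12, add_m21, add_m22, Preadditive.add_comp] <;> abel
  comp_add _ _ _ _ _ _ := by ext <;> simp only [comp_m11, comp_m12, comp_m21, comp_m22, add_m11,
    add_m12, add_m21, add_m22, Preadditive.comp_add] <;> abel

section EqToHom

variable (h : M = N)

@[simp] lemma eqToHom_m11 : (eqToHom h).m11 = eqToHom (congrArg fst h) := by subst h; rfl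
@[simp] lemma eqToHom_m21 : (eqToHom h).m21 = 0 := by subst h; rfl
@[simp] lemma eqToHom_m22 : (eqToHom h).m22 = eqToHom (congrArg snd h) := by subst h; rfl

end EqToHom

lemma isZero_of_isZero_fst_snd (h₁ : IsZero M.fst) (h₂ : IsZero M.snd) : IsZero M := by
  rw [IsZero.iff_id_eq_zero]
  ext
  exacts [h₁.eq_of_src _ _, h₁.eq_of_src _ _, h₂.eq_of_src _ _, h₂.eq_of_src _ _]

section Families

variable {F G H : X → FormalBiprod A}

def fam11 (u : ∀ σ τ, F σ ⟶ G τ) (σ τ : X) : (F σ).fst ⟶ (G τ).fst := (u σ τ).m11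
def fam12 (u : ∀ σ τ, F σ ⟶ G τ) (σ τ : X) : (F σ).fst ⟶ (G τ).snd := (u σ τ).m12
def fam21 (u : ∀ σ τ, F σ ⟶ G τ) (σ τ : X) : (F σ).snd ⟶ (G τ).fst := (u σ τ).m21
def fam22 (u : ∀ σ τ, F σ ⟶ G τ) (σ τ : X) : (F σ).snd ⟶ (G τ).snd := (u σ τ).m22

omit [PartialOrder X] [∀ ρ σ : X, Fintype {τ : X // ρ ≤ τ ∧ τ ≤ σ}] in
lemma fam_ext {u v : ∀ σ τ, F σ ⟶ G τ} (h11 : fam11 u = fam11 v) (h12 : fam12 u = fam12 v)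
    (h21 : fam21 u = fam21 v) (h22 : fam22 u = fam22 v) : u = v :=
  funext₂ fun σ τ => hom_ext (congrFun₂ h11 σ τ) (congrFun₂ h12 σ τ) (congrFun₂ h21 σ τ)
    (congrFun₂ h22 σ τ)

section Add

omit [PartialOrder X] [∀ ρ σ : X, Fintype {τ : X // ρ ≤ τ ∧ τ ≤ σ}]
variable (u v : ∀ σ τ, F σ ⟶ G τ)

lemma fam11_add : fam11 (u + v) = fam11 u + fam11 v := rfl
lemma fam21_add : fam21 (u + v) = fam21 u + fam21 v := rfl
lemma fam22_add : fam22 (u + v) = fam22 u + fam22 v := rfl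

end Add

section Conv

variable (u : ∀ σ τ, F σ ⟶ G τ) (v : ∀ τ ρ, G τ ⟶ H ρ)

lemma fam11_conv : fam11 (u ⋆ v) = fam11 u ⋆ fam11 v + fam12 u ⋆ fam21 v := by
  ext σ ρ
  simp [fam11, fam12, fam21, conv, Finset.sum_add_distrib]

lemma fam12_conv : fam12 (u ⋆ v) = fam11 u ⋆ fam12 v + fam12 u ⋆ fam22 v := by
  ext σ ρ
  simp [fam11, fam12, fam22, conv, Finset.sum_add_distrib]

lemma fam21_conv : fam21 (u ⋆ v) = fam21 u ⋆ fam11 v + fam22 u ⋆ fam21 v := by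
  ext σ ρ
  simp [fam11, fam21, fam22, conv, Finset.sum_add_distrib]

lemma fam22_conv : fam22 (u ⋆ v) = fam21 u ⋆ fam12 v + fam22 u ⋆ fam22 v := by
  ext σ ρ
  simp [fam12, fam21, fam22, conv, Finset.sum_add_distrib]

end Conv

section Delta

omit [PartialOrder X] [∀ ρ σ : X, Fintype {τ : X // ρ ≤ τ ∧ τ ≤ σ}]

lemma fam11_delta : fam11 (delta F) = delta fun σ => (F σ).fst := by
  ext σ ρ
  unfold fam11 delta
  split_ifs <;> simp

lemma fam21_delta : fam21 (delta F) = 0 := by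
  ext σ ρ
  unfold fam21 delta
  split_ifs <;> simp

lemma fam22_delta : fam22 (delta F) = delta fun σ => (F σ).snd := by
  ext σ ρ
  unfold fam22 delta
  split_ifs <;> simp

end Delta

end Families

end FormalBiprod


namespace HomGC

variable {C D : GCx X A} (f : HomGC C D)

lemma d_conv_f (i : ℤ) : C.d i (i - 1) ⋆ f.f (i - 1) = f.f i ⋆ D.d i (i - 1) :=
  funext₂ (f.comm i)

lemma f_comp_d_self (i : ℤ) (σ : X) :
    f.f i σ σ ≫ D.d i (i - 1) σ σ = C.d i (i - 1) σ σ ≫ f.f (i - 1) σ σ := by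
  simpa only [conv_apply_self] using (congrFun₂ (f.d_conv_f i) σ σ).symm

end HomGC

section Cone

open FormalBiprod

variable {C D : GCx X A} (f : HomGC C D)

noncomputable def coneD12 (i j : ℤ) (σ τ : X) : C.ob (i - 1) σ ⟶ D.ob j τ :=
  if h : j = i - 1 then eqToHom (by rw [h]) ≫ f.f j σ τ else 0

lemma coneD12_of_eq {i j : ℤ} (h : j = i - 1) (σ τ : X) :
    coneD12 f i j σ τ = eqToHom (by rw [h]) ≫ f.f j σ τ :=
  dif_pos h

lemma coneD12_sub_one (i : ℤ) : coneD12 f i (i - 1) = f.f (i - 1) := by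
  ext σ τ
  simp [coneD12_of_eq f rfl]

-- The mapping cone `C[i - 1] ⊞ D[i]`, with differential `[[-d, f], [0, d]]`.
noncomputable def coneD (i j : ℤ) (σ τ : X) :
    (⟨C.ob (i - 1) σ, D.ob i σ⟩ : FormalBiprod A) ⟶ ⟨C.ob (j - 1) τ, D.ob j τ⟩ :=
  ⟨(-C.d (i - 1) (j - 1)) σ τ, coneD12 f i j σ τ, 0, D.d i j σ τ⟩

@[simp] lemma coneD_m11 (i j : ℤ) (σ τ : X) : (coneD f i j σ τ).m11 = -C.d (i - 1) (j - 1) σ τ :=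
  rfl
@[simp] lemma coneD_m12 (i j : ℤ) (σ τ : X) : (coneD f i j σ τ).m12 = coneD12 f i j σ τ := rfl
@[simp] lemma coneD_m21 (i j : ℤ) (σ τ : X) : (coneD f i j σ τ).m21 = 0 := rfl
@[simp] lemma coneD_m22 (i j : ℤ) (σ τ : X) : (coneD f i j σ τ).m22 = D.d i j σ τ := rfl

lemma fam11_coneD (i j : ℤ) : fam11 (coneD f i j) = -C.d (i - 1) (j - 1) := rfl
lemma fam12_coneD (i j : ℤ) : fam12 (coneD f i j) = coneD12 f i j := rfl
lemma fam21_coneD (i j : ℤ) : fam21 (coneD f i j) = 0 := rfl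
lemma fam22_coneD (i j : ℤ) : fam22 (coneD f i j) = D.d i j := rfl

lemma coneD_conv_coneD (i : ℤ) : coneD f i (i - 1) ⋆ coneD f (i - 1) (i - 1 - 1) = 0 := by
  apply fam_ext <;>
    simp only [fam11_conv, fam12_conv, fam21_conv, fam22_conv, fam11_coneD, fam12_coneD,
      fam21_coneD, fam22_coneD, coneD12_sub_one, neg_conv, conv_neg, neg_neg, conv_zero,
      zero_conv, add_zero, zero_add]
  · exact C.d_conv_d (i - 1)
  · rw [f.d_conv_f, neg_add_cancel]
    rfl
  · rw [neg_zero]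
    rfl
  · exact D.d_conv_d i

noncomputable abbrev cone : GCx X (FormalBiprod A) where
  ob i σ := ⟨C.ob (i - 1) σ, D.ob i σ⟩
  d := coneD f
  shape i j σ τ h := by
    ext
    · exact (congrArg Neg.neg (C.shape _ _ σ τ fun h' => h ⟨h'.1, by omega⟩)).trans neg_zero
    · show coneD12 f i j σ τ = 0
      unfold coneD12
      split_ifs with hj
      · rw [f.shape _ σ τ fun h' => h ⟨h', hj⟩, comp_zero]
      · rfl
    · rfl
    · exact D.shape i j σ τ h
  dsq i σ ρ := congrFun₂ (coneD_conv_coneD f i) σ ρ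
  bounded := by
    obtain ⟨N₁, h₁⟩ := C.bounded
    obtain ⟨N₂, h₂⟩ := D.bounded
    refine ⟨N₁ + N₂ + 1, fun i σ hi => isZero_of_isZero_fst_snd (h₁ (i - 1) σ ?_) (h₂ i σ ?_)⟩
    · have := abs_sub_abs_le_abs_sub i 1
      rw [abs_one] at this
      push_cast at hi
      omega
    · push_cast at hi
      omega

end Cone

section LocalContraction

open FormalBiprod

variable {C D : GCx X A} (f : HomGC C D) {σ : X} (g : ∀ i, D.ob i σ ⟶ C.ob i σ)
  (P : ∀ i j, C.ob i σ ⟶ C.ob j σ) (Q : ∀ i j, D.ob i σ ⟶ D.ob j σ)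

noncomputable def homotopyDefect (i j : ℤ) : C.ob i σ ⟶ D.ob j σ :=
  P i j ≫ f.f j σ σ - f.f i σ σ ≫ Q i j

noncomputable def shiftedInv (i k : ℤ) : D.ob i σ ⟶ C.ob k σ :=
  if h : i = k then g i ≫ eqToHom (by rw [h]) else 0

@[simp] lemma shiftedInv_self (i : ℤ) : shiftedInv g i i = g i := by
  simp [shiftedInv]

lemma shiftedInv_comp_eqToHom {i k : ℤ} (h : i = k) :
    shiftedInv g i k ≫ eqToHom (by rw [h]) = g i := by
  subst h
  simp

-- The contraction `[[-P, -P R], [g, Q + g R]]` of the cone of a homotopy equivalence, with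
-- `R = homotopyDefect f P Q` a cycle by `homotopyDefect_comp_d`.
noncomputable def coneLocalContraction (i j : ℤ) : (cone f).ob i σ ⟶ (cone f).ob j σ :=
  ⟨-P (i - 1) (j - 1), -(P (i - 1) (j - 1) ≫ homotopyDefect f P Q (j - 1) j),
    shiftedInv g i (j - 1), Q i j + g i ≫ homotopyDefect f P Q i j⟩

section

variable {g P Q}
  (hg : ∀ i, D.d i (i - 1) σ σ ≫ g (i - 1) = g i ≫ C.d i (i - 1) σ σ)
  (hP : ∀ i, C.d i (i - 1) σ σ ≫ P (i - 1) i + P i (i + 1) ≫ C.d (i + 1) i σ σ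
    = 𝟙 (C.ob i σ) - f.f i σ σ ≫ g i)
  (hQ : ∀ i, D.d i (i - 1) σ σ ≫ Q (i - 1) i + Q i (i + 1) ≫ D.d (i + 1) i σ σ
    = 𝟙 (D.ob i σ) - g i ≫ f.f i σ σ)
include hP hQ

lemma homotopyDefect_comp_d (i : ℤ) :
    homotopyDefect f P Q i (i + 1) ≫ D.d (i + 1) i σ σ
      = -(C.d i (i - 1) σ σ ≫ homotopyDefect f P Q (i - 1) i) := by
  have hf : f.f (i + 1) σ σ ≫ D.d (i + 1) i σ σ = C.d (i + 1) i σ σ ≫ f.f i σ σ := by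
    have h := f.f_comp_d_self (i + 1) σ
    rwa [Int.add_sub_cancel] at h
  have hP' : P i (i + 1) ≫ C.d (i + 1) i σ σ
      = 𝟙 _ - f.f i σ σ ≫ g i - C.d i (i - 1) σ σ ≫ P (i - 1) i := by
    rw [← hP i]
    abel
  have hQ' : Q i (i + 1) ≫ D.d (i + 1) i σ σ
      = 𝟙 _ - g i ≫ f.f i σ σ - D.d i (i - 1) σ σ ≫ Q (i - 1) i := by
    rw [← hQ i]
    abel
  simp only [homotopyDefect, Preadditive.sub_comp, Preadditive.comp_sub, Category.assoc, hf,
    hQ', reassoc_of% hP', reassoc_of% (f.f_comp_d_self i σ), Category.id_comp,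
    Category.comp_id]
  abel

include hg in
lemma cone_d_comp_coneLocalContraction_add (i : ℤ) :
    (cone f).d i (i - 1) σ σ ≫ coneLocalContraction f g P Q (i - 1) i
      + coneLocalContraction f g P Q i (i + 1) ≫ (cone f).d (i + 1) i σ σ = 𝟙 _ := by
  have hi : i + 1 - 1 = i := Int.add_sub_cancel i 1
  have hP' : C.d (i - 1) (i - 1 - 1) σ σ ≫ P (i - 1 - 1) (i - 1) + P (i - 1) i ≫ C.d i (i - 1) σ σ
      = 𝟙 _ - f.f (i - 1) σ σ ≫ g (i - 1) := by
    rw [← hP (i - 1),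
      congrArg (fun k => P (i - 1) k ≫ C.d k (i - 1) σ σ) (Int.sub_add_cancel i 1)]
  have hd : coneD12 f (i + 1) i σ σ = eqToHom (by rw [hi]) ≫ f.f i σ σ :=
    coneD12_of_eq f hi.symm σ σ
  have hPf : P (i - 1) (i + 1 - 1) ≫ coneD12 f (i + 1) i σ σ = P (i - 1) i ≫ f.f i σ σ := by
    rw [hd, ← Category.assoc, comp_eqToHom_index (P (i - 1)) hi]
  have hgf : shiftedInv g i (i + 1 - 1) ≫ coneD12 f (i + 1) i σ σ = g i ≫ f.f i σ σ := by
    rw [hd, ← Category.assoc, shiftedInv_comp_eqToHom g hi.symm]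
  have hPd : P (i - 1) (i + 1 - 1) ≫ C.d (i + 1 - 1) (i - 1) σ σ
      = P (i - 1) i ≫ C.d i (i - 1) σ σ :=
    congrArg (fun k => P (i - 1) k ≫ C.d k (i - 1) σ σ) hi
  have hgd : shiftedInv g i (i + 1 - 1) ≫ C.d (i + 1 - 1) (i - 1) σ σ
      = g i ≫ C.d i (i - 1) σ σ := by
    rw [congrArg (fun k => shiftedInv g i k ≫ C.d k (i - 1) σ σ) hi, shiftedInv_self]
  have hPR : P (i - 1) (i + 1 - 1) ≫ homotopyDefect f P Q (i + 1 - 1) (i + 1)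
      = P (i - 1) i ≫ homotopyDefect f P Q i (i + 1) :=
    congrArg (fun k => P (i - 1) k ≫ homotopyDefect f P Q k (i + 1)) hi
  have hR := homotopyDefect_comp_d f hP hQ i
  ext
  · simp only [coneLocalContraction, comp_m11, add_m11, id_m11, coneD_m11, coneD_m12,
      coneD_m21, coneD12_sub_one, shiftedInv_self, Preadditive.neg_comp_neg, comp_zero, add_zero,
      hPd]
    rw [add_right_comm, hP', sub_add_cancel]
  · simp only [coneLocalContraction, comp_m12, add_m12, id_m12, coneD_m11, coneD_m12,
      coneD_m22, coneD12_sub_one, Preadditive.neg_comp, Preadditive.comp_add, hPf, hPR,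
      Category.assoc, hR, Preadditive.comp_neg, neg_neg]
    have key : (C.d (i - 1) (i - 1 - 1) σ σ ≫ P (i - 1 - 1) (i - 1) + f.f (i - 1) σ σ ≫ g (i - 1)
        + P (i - 1) i ≫ C.d i (i - 1) σ σ) ≫ homotopyDefect f P Q (i - 1) i
        = homotopyDefect f P Q (i - 1) i := by
      rw [add_right_comm, hP', sub_add_cancel, Category.id_comp]
    simp only [Preadditive.add_comp, Category.assoc] at key
    linear_combination (norm := skip) key
    unfold homotopyDefect
    abel
  · simp only [coneLocalContraction, comp_m21, add_m21, id_m21, coneD_m11, coneD_m21,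
      coneD_m22, shiftedInv_self, Preadditive.comp_neg, zero_comp, comp_zero, add_zero, hgd, hg]
    abel
  · simp only [coneLocalContraction, comp_m22, add_m22, id_m22, coneD_m12, coneD_m21,
      coneD_m22, shiftedInv_self, zero_comp, hgf, Preadditive.comp_add, Preadditive.add_comp,
      reassoc_of% (hg i), Category.assoc, hR, Preadditive.comp_neg]
    rw [← sub_add_cancel (𝟙 _) (g i ≫ f.f i σ σ), ← hQ i]
    abel

end

lemma exists_cone_localContraction {σ : X} (h : IsLocalEquiv C D f σ) :
    ∃ s : ∀ i j, (cone f).ob i σ ⟶ (cone f).ob j σ, ∀ i,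
      (cone f).d i (i - 1) σ σ ≫ s (i - 1) i + s i (i + 1) ≫ (cone f).d (i + 1) i σ σ = 𝟙 _ :=
  let ⟨_, hg, ⟨_, hP⟩, ⟨_, hQ⟩⟩ := h
  ⟨_, cone_d_comp_coneLocalContraction_add f hg hP hQ⟩

end LocalContraction

section Extraction

open FormalBiprod

variable {C D : GCx X A} {f : HomGC C D} (Γ : ∀ i j σ τ, (cone f).ob i σ ⟶ (cone f).ob j τ)

noncomputable def coneInv (i : ℤ) (σ τ : X) : D.ob i σ ⟶ C.ob i τ :=
  fam21 (Γ i (i + 1)) σ τ ≫ eqToHom (congrArg (C.ob · τ) (Int.add_sub_cancel i 1))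

-- Degree `i` of `C` sits in degree `i + 1` of the cone, whence the transports.
noncomputable def coneHomotopyC (i j : ℤ) (σ τ : X) : C.ob i σ ⟶ C.ob j τ :=
  -(eqToHom (congrArg (C.ob · σ) (Int.add_sub_cancel i 1).symm) ≫ fam11 (Γ (i + 1) (j + 1)) σ τ
    ≫ eqToHom (congrArg (C.ob · τ) (Int.add_sub_cancel j 1)))

lemma fam21_eq_coneInv (i : ℤ) : fam21 (Γ (i - 1) i) = coneInv Γ (i - 1) := by
  ext σ τ
  have h := congrArg Hom.m21
    (comp_eqToHom_index (fun k => Γ (i - 1) k σ τ) (Int.sub_add_cancel i 1))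
  simp only [comp_m21, eqToHom_m11, eqToHom_m21, comp_zero, add_zero] at h
  exact h.symm

lemma fam11_eq_coneHomotopyC (i j : ℤ) : fam11 (Γ i j) = -coneHomotopyC Γ (i - 1) (j - 1) := by
  ext σ τ
  simp only [Pi.neg_apply, coneHomotopyC, neg_neg]
  exact (eqToHom_comp_comp_eqToHom_index (F := fun k => C.ob (k - 1) σ)
    (G := fun l => C.ob (l - 1) τ) (fun k l => fam11 (Γ k l) σ τ) (Int.sub_add_cancel i 1).symm
    (Int.sub_add_cancel j 1).symm).symm

noncomputable def coneHomotopyD (i j : ℤ) : ∀ σ τ, D.ob i σ ⟶ D.ob j τ :=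
  fam22 (Γ i j)

lemma coneInv_conv {H : X → A} (i : ℤ) (v : ∀ τ ρ, C.ob i τ ⟶ H ρ) :
    coneInv Γ i ⋆ v = fam21 (Γ i (i + 1)) ⋆
      fun τ ρ => eqToHom (congrArg (C.ob · τ) (Int.add_sub_cancel i 1)) ≫ v τ ρ :=
  comp_conv_eq_conv_comp _ _ _

variable {Γ}

lemma d_conv_coneInv (hΓ : (cone f).IsContraction Γ) (i : ℤ) :
    D.d i (i - 1) ⋆ coneInv Γ (i - 1) = coneInv Γ i ⋆ C.d i (i - 1) := by
  have h := congrArg fam21 (hΓ.2 i)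
  have hd : C.d (i + 1 - 1) (i - 1) = fun τ ρ =>
      eqToHom (congrArg (C.ob · τ) (Int.add_sub_cancel i 1)) ≫ C.d i (i - 1) τ ρ :=
    funext₂ fun τ ρ =>
      (eqToHom_comp_index (fun k => C.d k (i - 1) τ ρ) (Int.add_sub_cancel i 1)).symm
  rw [GCx.nullHomotopicMap, fam21_add, fam21_conv, fam21_conv, fam21_delta, fam21_coneD,
    fam22_coneD, fam11_coneD, fam21_coneD, zero_conv, zero_add, conv_zero, add_zero,
    fam21_eq_coneInv, conv_neg, hd, ← coneInv_conv] at h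
  rwa [← sub_eq_add_neg, sub_eq_zero] at h

lemma nullHomotopicMap_coneHomotopyC (hΓ : (cone f).IsContraction Γ) (i : ℤ) :
    C.nullHomotopicMap (coneHomotopyC Γ) (i - 1)
      = delta (C.ob (i - 1)) - f.f (i - 1) ⋆ coneInv Γ (i - 1) := by
  have h := congrArg fam11 (hΓ.2 i)
  rw [GCx.nullHomotopicMap, fam11_add, fam11_conv, fam11_conv, fam11_delta, fam11_coneD,
    fam12_coneD, fam11_coneD, fam21_coneD, conv_zero, add_zero, coneD12_sub_one,
    fam21_eq_coneInv, fam11_eq_coneHomotopyC, fam11_eq_coneHomotopyC, neg_conv, conv_neg,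
    neg_neg, neg_conv, conv_neg, neg_neg,
    congrArg (fun k => coneHomotopyC Γ (i - 1) k ⋆ C.d k (i - 1))
      (show i + 1 - 1 = i - 1 + 1 by omega)] at h
  rw [GCx.nullHomotopicMap, ← h]
  abel

lemma nullHomotopicMap_coneHomotopyD (hΓ : (cone f).IsContraction Γ) (i : ℤ) :
    D.nullHomotopicMap (coneHomotopyD Γ) i = delta (D.ob i) - coneInv Γ i ⋆ f.f i := by
  have h := congrArg fam22 (hΓ.2 i)
  have hd : coneD12 f (i + 1) i = fun τ ρ =>
      eqToHom (congrArg (C.ob · τ) (Int.add_sub_cancel i 1)) ≫ f.f i τ ρ :=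
    funext₂ (coneD12_of_eq f (Int.add_sub_cancel i 1).symm)
  rw [GCx.nullHomotopicMap, fam22_add, fam22_conv, fam22_conv, fam22_delta, fam21_coneD,
    fam22_coneD, fam12_coneD, fam22_coneD, zero_conv, zero_add, hd, ← coneInv_conv] at h
  rw [GCx.nullHomotopicMap, coneHomotopyD, coneHomotopyD, ← h]
  abel

end Extraction

section Main

variable {C D : GCx X A} {f : HomGC C D}

theorem isEquivGC_of_isContraction_cone {Γ : ∀ i j σ τ, (cone f).ob i σ ⟶ (cone f).ob j τ}
    (hΓ : (cone f).IsContraction Γ) : IsEquivGC C D f := by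
  refine ⟨⟨coneInv Γ, fun i σ τ hστ => ?_, fun i σ ρ => congrFun₂ (d_conv_coneInv hΓ i) σ ρ⟩,
    ⟨coneHomotopyC Γ, fun i j σ τ h => ?_, fun i σ ρ => ?_⟩,
    ⟨coneHomotopyD Γ, fun i j σ τ h => ?_,
      fun i σ ρ => congrFun₂ (nullHomotopicMap_coneHomotopyD hΓ i) σ ρ⟩⟩
  · rw [coneInv, FormalBiprod.fam21, hΓ.1 i (i + 1) σ τ fun h => hστ h.1]
    simp
  · rw [coneHomotopyC, FormalBiprod.fam11, hΓ.1 (i + 1) (j + 1) σ τ fun h' => h ⟨h'.1, by omega⟩]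
    simp
  · have h := nullHomotopicMap_coneHomotopyC hΓ (i + 1)
    rw [Int.add_sub_cancel] at h
    exact congrFun₂ h σ ρ
  · rw [coneHomotopyD, FormalBiprod.fam22, hΓ.1 i j σ τ h]
    rfl

theorem isEquivGC_of_forall_isLocalEquiv (h : ∀ σ, IsLocalEquiv C D f σ) : IsEquivGC C D f := by
  choose s hs using fun σ => exists_cone_localContraction f (h σ)
  obtain ⟨Γ, hΓ⟩ := (cone f).exists_isContraction_of_local s hs
  exact isEquivGC_of_isContraction_cone hΓ

theorem IsEquivGC.isLocalEquiv (h : IsEquivGC C D f) (σ : X) : IsLocalEquiv C D f σ := by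
  obtain ⟨g, ⟨P, -, hP⟩, ⟨Q, -, hQ⟩⟩ := h
  refine ⟨fun i => g.f i σ σ, fun i => (g.f_comp_d_self i σ).symm,
    ⟨fun i j => P i j σ σ, fun i => ?_⟩, ⟨fun i j => Q i j σ σ, fun i => ?_⟩⟩
  · have h : (C.nullHomotopicMap P i) σ σ = (delta (C.ob i) - f.f i ⋆ g.f i) σ σ := hP i σ σ
    simpa only [GCx.nullHomotopicMap, Pi.add_apply, Pi.sub_apply, conv_apply_self,
      delta_apply_self] using h
  · have h : (D.nullHomotopicMap Q i) σ σ = (delta (D.ob i) - g.f i ⋆ f.f i) σ σ := hQ i σ σ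
    simpa only [GCx.nullHomotopicMap, Pi.add_apply, Pi.sub_apply, conv_apply_self,
      delta_apply_self] using h

end Main

/-- a chain map `f : C → D` of finite chain complexes in `A*(X)` is a chain
equivalence in `A*(X)` if and only if each diagonal component `f_{σ,σ} : C(σ) → D(σ)` is
a chain equivalence in `A`. -/
theorem stmt5 (C D : GCx X A) (f : HomGC C D) :
    IsEquivGC C D f ↔ ∀ σ : X, IsLocalEquiv C D f σ :=
  ⟨fun h σ => h.isLocalEquiv σ, isEquivGC_of_forall_isLocalEquiv⟩
end

section
/- Let X be a metric space, n ≥ 1, and define v_i = i for i ≤ 0 and v_i = Σ_{j=0}^{i-1} ((n+2)/(n+1))^j for i > 0. Define the exponential translation t^{-1}: X × ℝ → X × ℝ by mapping (x, s·v_i + (1−s)·v_{i+1}) to (x, s·v_{i−1} + (1−s)·v_i) for s ∈ [0,1]. Then for all z₁, z₂ ∈ X × [1, ∞), d_{O(X_+)}(t^{-1}(z₁), t^{-1}(z₂)) ≤ ((n+1)/(n+2)) · d_{O(X_+)}(z₁, z₂). -/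
/-! For `i ≥ 1` the geometric sums satisfy `v_i = 1 + q⁻¹ v_{i-1}` with `q = (n+1)/(n+2)`, so on
heights `≥ 1` the map `t⁻¹` is the affine map `a ↦ q (a - 1)`, also between interpolated points.
Such a map multiplies height differences by exactly `q` and the (positive part of the) lower
height by at most `q`, hence contracts the cone metric by `q`. -/
/-- The open cone distance formula on `X × ℝ`. -/
noncomputable def coneDist {X : Type*} [PseudoMetricSpace X] (z w : X × ℝ) : ℝ :=
  max (min z.2 w.2) 0 * dist z.1 w.1 + |z.2 - w.2|

/-- The subdivision points: v_i = i for i ≤ 0 and v_i = Σ_{j=0}^{i-1} ((n+2)/(n+1))^j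
for i > 0. -/
noncomputable def vpt (n : ℕ) (i : ℤ) : ℝ :=
  if 0 < i then ∑ j ∈ Finset.range i.toNat, (((n : ℝ) + 2) / ((n : ℝ) + 1)) ^ j
  else (i : ℝ)

theorem coneDist_mul_sub_le {X : Type*} [PseudoMetricSpace X] {q c : ℝ} (hq : 0 ≤ q)
    (hc : 0 ≤ c) (x₁ x₂ : X) (a₁ a₂ : ℝ) :
    coneDist (x₁, q * (a₁ - c)) (x₂, q * (a₂ - c)) ≤ q * coneDist (x₁, a₁) (x₂, a₂) := by
  unfold coneDist
  have hmin : min (q * (a₁ - c)) (q * (a₂ - c)) = q * (min a₁ a₂ - c) := by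
    rw [← mul_min_of_nonneg _ _ hq, min_sub_sub_right]
  have hheight : max (q * (min a₁ a₂ - c)) 0 ≤ q * max (min a₁ a₂) 0 :=
    max_le (mul_le_mul_of_nonneg_left (by linarith [le_max_left (min a₁ a₂) 0]) hq)
      (by positivity)
  have habs : |q * (a₁ - c) - q * (a₂ - c)| = q * |a₁ - a₂| := by
    rw [← mul_sub, sub_sub_sub_cancel_right, abs_mul, abs_of_nonneg hq]
  rw [hmin, habs, mul_add, ← mul_assoc]
  gcongr

theorem vpt_eq_one_add_mul (n : ℕ) {i : ℤ} (hi : 1 ≤ i) :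
    vpt n i = 1 + ((n : ℝ) + 2) / ((n : ℝ) + 1) * vpt n (i - 1) := by
  obtain rfl | hi := hi.eq_or_lt
  · norm_num [vpt]
  · unfold vpt
    rw [if_pos (by omega), if_pos (by omega), show i.toNat = (i - 1).toNat + 1 by omega,
      geom_sum_succ, add_comm]

theorem vpt_sub_one (n : ℕ) {i : ℤ} (hi : 1 ≤ i) :
    vpt n (i - 1) = ((n : ℝ) + 1) / ((n : ℝ) + 2) * (vpt n i - 1) := by
  rw [vpt_eq_one_add_mul n hi]
  field_simp
  ring

theorem interpolate_vpt_sub_one (n : ℕ) {i : ℤ} (hi : 1 ≤ i) (s : ℝ) :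
    s * vpt n (i - 1) + (1 - s) * vpt n i
      = ((n : ℝ) + 1) / ((n : ℝ) + 2) * (s * vpt n i + (1 - s) * vpt n (i + 1) - 1) := by
  have hsucc := vpt_sub_one n (show 1 ≤ i + 1 by omega)
  rw [add_sub_cancel_right] at hsucc
  rw [vpt_sub_one n hi, hsucc]
  ring

theorem stmt10_general (n : ℕ) (X : Type*) [MetricSpace X]
    (x₁ x₂ : X) (i₁ i₂ : ℤ) (hi₁ : 1 ≤ i₁) (hi₂ : 1 ≤ i₂)
    (s₁ s₂ : ℝ) :
    coneDist (x₁, s₁ * vpt n (i₁ - 1) + (1 - s₁) * vpt n i₁)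
        (x₂, s₂ * vpt n (i₂ - 1) + (1 - s₂) * vpt n i₂)
      ≤ (((n : ℝ) + 1) / ((n : ℝ) + 2)) *
        coneDist (x₁, s₁ * vpt n i₁ + (1 - s₁) * vpt n (i₁ + 1))
          (x₂, s₂ * vpt n i₂ + (1 - s₂) * vpt n (i₂ + 1)) := by
  rw [interpolate_vpt_sub_one n hi₁, interpolate_vpt_sub_one n hi₂]
  exact coneDist_mul_sub_le (by positivity) zero_le_one _ _ _ _

/-- the exponential translation t^{-1}, mapping the point
(x, s·v_{i} + (1−s)·v_{i+1}) to (x, s·v_{i−1} + (1−s)·v_{i}), contracts the open cone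
metric on X × [1,∞) by the factor (n+1)/(n+2). -/
theorem stmt10 (n : ℕ) (hn : 1 ≤ n) (X : Type*) [MetricSpace X]
    (x₁ x₂ : X) (i₁ i₂ : ℤ) (hi₁ : 1 ≤ i₁) (hi₂ : 1 ≤ i₂)
    (s₁ s₂ : ℝ) (hs₁ : s₁ ∈ Set.Icc (0 : ℝ) 1) (hs₂ : s₂ ∈ Set.Icc (0 : ℝ) 1) :
    coneDist (x₁, s₁ * vpt n (i₁ - 1) + (1 - s₁) * vpt n i₁)
        (x₂, s₂ * vpt n (i₂ - 1) + (1 - s₂) * vpt n i₂)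
      ≤ (((n : ℝ) + 1) / ((n : ℝ) + 2)) *
        coneDist (x₁, s₁ * vpt n i₁ + (1 - s₁) * vpt n (i₁ + 1))
          (x₂, s₂ * vpt n i₂ + (1 - s₂) * vpt n (i₂ + 1)) :=
  stmt10_general n X x₁ x₂ i₁ i₂ hi₁ hi₂ s₁ s₂
end

section
/- Let X be a space with metric d and consider z₁ = (x,s), z₂ = (y,t) ∈ X × [1,∞) ⊂ O(X_+) with s ≥ t, and m ≥ 1. Then the convex combination w = (1/(m+1))·z₁ + (m/(m+1))·z₂ satisfies d_{O(X_+)}(z₁, w) ≤ (1 + (s−t)/((m+1)t)) · (m/(m+1)) · d_{O(X_+)}(z₁, z₂). -/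
lemma coneDist_of_le {X : Type*} [PseudoMetricSpace X] {s t : ℝ} (x y : X)
    (ht : 0 ≤ t) (hst : t ≤ s) :
    coneDist (x, s) (y, t) = t * dist x y + (s - t) := by
  simp only [coneDist, min_eq_right hst, max_eq_left ht, abs_of_nonneg (sub_nonneg.2 hst)]

section Segment

variable {E : Type*} [SeminormedAddCommGroup E] [NormedSpace ℝ E] {a b s t : ℝ}

lemma dist_self_smul_add_smul (x y : E) (hb : 0 ≤ b) (hab : a + b = 1) :
    dist x (a • x + b • y) = b * dist x y := by
  obtain rfl : a = 1 - b := by linarith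
  rw [← AffineMap.lineMap_apply_module, dist_left_lineMap, Real.norm_of_nonneg hb]

lemma coneDist_smul_add_smul (x y : E) (ha : 0 ≤ a) (hb : 0 ≤ b) (hab : a + b = 1)
    (ht : 0 ≤ t) (hst : t ≤ s) :
    coneDist (x, s) (a • x + b • y, a * s + b * t)
      = (a * s + b * t) * (b * dist x y) + b * (s - t) := by
  have hlow : t ≤ a * s + b * t := by nlinarith
  have hhigh : a * s + b * t ≤ s := by nlinarith
  rw [coneDist_of_le _ _ (ht.trans hlow) hhigh, dist_self_smul_add_smul x y hb hab]
  congr 1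
  linear_combination (-s) * hab

theorem coneDist_smul_add_smul_le (x y : E) (ha : 0 ≤ a) (hb : 0 ≤ b) (hab : a + b = 1)
    (ht : 0 < t) (hst : t ≤ s) :
    coneDist (x, s) (a • x + b • y, a * s + b * t)
      ≤ (1 + a * (s - t) / t) * b * coneDist (x, s) (y, t) := by
  set c := a * (s - t) / t
  have hc : 0 ≤ c := by have := sub_nonneg.2 hst; positivity
  have hweight : a * s + b * t = (1 + c) * t := by
    simp only [c]
    field_simp
    linear_combination t * hab
  rw [coneDist_smul_add_smul x y ha hb hab ht.le hst, coneDist_of_le x y ht.le hst, hweight]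
  nlinarith [mul_nonneg (mul_nonneg hc hb) (sub_nonneg.2 hst)]

end Segment

theorem stmt13_general (E : Type*) [NormedAddCommGroup E] [NormedSpace ℝ E]
    (x y : E)
    (s t : ℝ) (ht : 1 ≤ t) (hst : t ≤ s) (m : ℕ) :
    coneDist (x, s)
        ((1 / ((m : ℝ) + 1)) • x + ((m : ℝ) / ((m : ℝ) + 1)) • y,
          (1 / ((m : ℝ) + 1)) * s + ((m : ℝ) / ((m : ℝ) + 1)) * t)
      ≤ (1 + (s - t) / (((m : ℝ) + 1) * t)) * ((m : ℝ) / ((m : ℝ) + 1)) *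
        coneDist (x, s) (y, t) := by
  have hm₁ : (0 : ℝ) < (m : ℝ) + 1 := by positivity
  have hweights : 1 / ((m : ℝ) + 1) + (m : ℝ) / ((m : ℝ) + 1) = 1 := by
    rw [← add_div, add_comm, div_self hm₁.ne']
  have hfactor : (s - t) / (((m : ℝ) + 1) * t) = 1 / ((m : ℝ) + 1) * (s - t) / t := by
    rw [one_div_mul_eq_div, div_div]
  rw [hfactor]
  exact coneDist_smul_add_smul_le x y (by positivity) (by positivity) hweights
    (by linarith) hst

/-- for z₁ = (x,s), z₂ = (y,t) in X × [1,∞) ⊂ O(X₊) with s ≥ t (X a convex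
subset of a normed space), the convex combination w = (1/(m+1))·z₁ + (m/(m+1))·z₂
satisfies d_{O(X₊)}(z₁,w) ≤ (1 + (s−t)/((m+1)t)) · (m/(m+1)) · d_{O(X₊)}(z₁,z₂). -/
theorem stmt13 (E : Type*) [NormedAddCommGroup E] [NormedSpace ℝ E]
    (X : Set E) (hX : Convex ℝ X) (x y : E) (hx : x ∈ X) (hy : y ∈ X)
    (s t : ℝ) (hs : 1 ≤ s) (ht : 1 ≤ t) (hst : t ≤ s) (m : ℕ) (hm : 1 ≤ m) :
    coneDist (x, s)
        ((1 / ((m : ℝ) + 1)) • x + ((m : ℝ) / ((m : ℝ) + 1)) • y,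
          (1 / ((m : ℝ) + 1)) * s + ((m : ℝ) / ((m : ℝ) + 1)) * t)
      ≤ (1 + (s - t) / (((m : ℝ) + 1) * t)) * ((m : ℝ) / ((m : ℝ) + 1)) *
        coneDist (x, s) (y, t) :=
  stmt13_general E x y s t ht hst m
end

section
/- Let τ be a simplex in X × [1, ∞) ⊂ O(X_+) contained in a block X × [v_i, v_{i+1}] with i ≥ 1 (where v_i = (n+1)(((n+2)/(n+1))^i − 1) and n = dim(X)+1, |τ| ≤ n). Then every simplex of the barycentric subdivision of τ has diameter, measured in the open cone metric, at most (1 − 1/((|τ|+1)^3)) times the diameter of τ. -/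
/-- The diameter of a subset of X × ℝ measured in the open cone metric. -/
noncomputable def coneDiam {X : Type*} [PseudoMetricSpace X] (s : Set (X × ℝ)) : ℝ :=
  sSup ((fun zw : (X × ℝ) × (X × ℝ) => coneDist zw.1 zw.2) '' (s ×ˢ s))

open Set AffineMap

section ConeDiam

variable {X : Type*} [PseudoMetricSpace X]

lemma coneDist_nonneg (z w : X × ℝ) : 0 ≤ coneDist z w :=
  add_nonneg (mul_nonneg (le_max_right _ _) dist_nonneg) (abs_nonneg _)

lemma continuous_coneDist : Continuous fun zw : (X × ℝ) × (X × ℝ) => coneDist zw.1 zw.2 := by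
  unfold coneDist
  fun_prop

lemma coneDiam_nonneg (s : Set (X × ℝ)) : 0 ≤ coneDiam s :=
  Real.sSup_nonneg <| by
    rintro _ ⟨_, _, rfl⟩
    exact coneDist_nonneg _ _

lemma coneDiam_le {s : Set (X × ℝ)} {c : ℝ} (hc : 0 ≤ c)
    (h : ∀ z ∈ s, ∀ w ∈ s, coneDist z w ≤ c) : coneDiam s ≤ c :=
  Real.sSup_le (by rintro _ ⟨⟨z, w⟩, ⟨hz, hw⟩, rfl⟩; exact h z hz w hw) hc

lemma coneDist_le_coneDiam {s : Set (X × ℝ)} (hs : IsCompact s) {z w : X × ℝ}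
    (hz : z ∈ s) (hw : w ∈ s) : coneDist z w ≤ coneDiam s :=
  le_csSup ((hs.prod hs).bddAbove_image continuous_coneDist.continuousOn)
    ⟨(z, w), ⟨hz, hw⟩, rfl⟩

lemma coneDiam_mono {s t : Set (X × ℝ)} (ht : IsCompact t) (hst : s ⊆ t) :
    coneDiam s ≤ coneDiam t :=
  coneDiam_le (coneDiam_nonneg t) fun _ hz _ hw => coneDist_le_coneDiam ht (hst hz) (hst hw)

end ConeDiam

section Homothety

variable {E : Type*} [SeminormedAddCommGroup E] [NormedSpace ℝ E]

lemma snd_mem_of_mem_convexHull {s : Set (E × ℝ)} {I : Set ℝ} (hI : Convex ℝ I)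
    (hs : ∀ x ∈ s, x.2 ∈ I) {x : E × ℝ} (hx : x ∈ convexHull ℝ s) : x.2 ∈ I :=
  convexHull_min hs (hI.linear_preimage (LinearMap.snd ℝ E ℝ)) hx

lemma coneDist_homothety_le {P a b : E × ℝ} {t r v : ℝ} (ht₀ : 0 ≤ t) (ht₁ : t ≤ 1)
    (hr : 0 ≤ r) (hv : 0 ≤ v) (ha : v ≤ a.2) (hb : v ≤ b.2) (hP : P.2 ≤ (1 + r) * v) :
    coneDist (homothety P t a) (homothety P t b) ≤ t * (1 + (1 - t) * r) * coneDist a b := by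
  set m := min a.2 b.2
  have hvm : v ≤ m := le_min ha hb
  have hfst : (homothety P t a).1 - (homothety P t b).1 = t • (a.1 - b.1) := by
    simp only [homothety_apply, vsub_eq_sub, vadd_eq_add, Prod.fst_add, Prod.smul_fst,
      Prod.fst_sub]
    rw [smul_sub, smul_sub, smul_sub]; abel
  have hsnd : ∀ x : E × ℝ, (homothety P t x).2 = t * x.2 + (1 - t) * P.2 := by
    intro x
    simp only [homothety_apply, vsub_eq_sub, vadd_eq_add, Prod.snd_add, Prod.smul_snd,
      Prod.snd_sub, smul_eq_mul]
    ring
  have hc : 0 ≤ (1 - t) * r := mul_nonneg (sub_nonneg.2 ht₁) hr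
  have hheight :
      max (min (homothety P t a).2 (homothety P t b).2) 0 ≤ (1 + (1 - t) * r) * m := by
    rw [hsnd, hsnd, min_add_add_right, ← mul_min_of_nonneg _ _ ht₀]
    refine max_le ?_ (mul_nonneg (by linarith) (hv.trans hvm))
    have hc' : 0 ≤ (1 - t) * (1 + r) := mul_nonneg (sub_nonneg.2 ht₁) (by linarith)
    nlinarith [mul_le_mul_of_nonneg_left hvm hc']
  have hdist : dist (homothety P t a).1 (homothety P t b).1 = t * dist a.1 b.1 := by
    rw [dist_eq_norm, dist_eq_norm, hfst, norm_smul, Real.norm_of_nonneg ht₀]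
  have habs : |(homothety P t a).2 - (homothety P t b).2| = t * |a.2 - b.2| := by
    rw [hsnd, hsnd, ← abs_of_nonneg ht₀, ← abs_mul, abs_of_nonneg ht₀]
    ring_nf
  have hab : coneDist a b = m * dist a.1 b.1 + |a.2 - b.2| := by
    rw [coneDist, max_eq_left (hv.trans hvm)]
  rw [coneDist, hdist, habs, hab]
  have hΔ := abs_nonneg (a.2 - b.2)
  calc _ ≤ (1 + (1 - t) * r) * m * (t * dist a.1 b.1) + t * |a.2 - b.2| := by gcongr
    _ ≤ t * (1 + (1 - t) * r) * (m * dist a.1 b.1 + |a.2 - b.2|) := by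
      nlinarith [mul_nonneg (mul_nonneg ht₀ hc) hΔ]

lemma coneDiam_image_homothety_le {s : Set (E × ℝ)} (hs : IsCompact s) {P : E × ℝ} {t r v : ℝ}
    (ht₀ : 0 ≤ t) (ht₁ : t ≤ 1) (hr : 0 ≤ r) (hv : 0 ≤ v) (hsv : ∀ x ∈ s, v ≤ x.2)
    (hP : P.2 ≤ (1 + r) * v) :
    coneDiam (homothety P t '' s) ≤ t * (1 + (1 - t) * r) * coneDiam s := by
  have hc : 0 ≤ t * (1 + (1 - t) * r) :=
    mul_nonneg ht₀ (add_nonneg zero_le_one (mul_nonneg (sub_nonneg.2 ht₁) hr))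
  refine coneDiam_le (mul_nonneg hc (coneDiam_nonneg s)) ?_
  rintro _ ⟨a, ha, rfl⟩ _ ⟨b, hb, rfl⟩
  exact (coneDist_homothety_le ht₀ ht₁ hr hv (hsv a ha) (hsv b hb) hP).trans
    (mul_le_mul_of_nonneg_left (coneDist_le_coneDiam hs ha hb) hc)

end Homothety

section Decomposition

variable {ι F : Type*} [Fintype ι] [AddCommGroup F] [Module ℝ F] (p : ι → F)

lemma exists_mem_convexHull_sum_smul_eq [Nonempty ι] {ν : ι → ℝ} (hν : ∀ j, 0 ≤ ν j) :
    ∃ a ∈ convexHull ℝ (range p), ∑ j, ν j • p j = (∑ j, ν j) • a := by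
  by_cases h : ∑ j, ν j = 0
  · have hν0 : ∀ j, ν j = 0 := fun j =>
      (Finset.sum_eq_zero_iff_of_nonneg fun j _ => hν j).1 h j (Finset.mem_univ j)
    refine ⟨p (Classical.arbitrary ι), subset_convexHull ℝ _ (mem_range_self _), ?_⟩
    simp [hν0]
  · refine ⟨Finset.univ.centerMass ν p, Finset.univ.centerMass_mem_convexHull
      (fun j _ => hν j) (lt_of_le_of_ne (Finset.sum_nonneg fun j _ => hν j) (Ne.symm h))
      (fun j _ => mem_range_self j), ?_⟩
    rw [Finset.centerMass, smul_inv_smul₀ h]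

lemma sum_smul_mem_image_homothety {μ : ι → ℝ} (hμ₀ : ∀ j, 0 ≤ μ j) (hμ₁ : ∑ j, μ j = 1)
    {j₀ : ι} {t : ℝ} (ht : 1 - t ≤ μ j₀) :
    ∑ j, μ j • p j ∈ homothety (p j₀) t '' convexHull ℝ (range p) := by
  classical
  have : Nonempty ι := ⟨j₀⟩
  set ν := μ - Pi.single j₀ (1 - t)
  have hν : ∀ j, 0 ≤ ν j := by
    intro j
    rcases eq_or_ne j j₀ with rfl | hj
    · simpa [ν] using ht
    · simpa [ν, hj] using hμ₀ j
  obtain ⟨a, ha, hsum⟩ := exists_mem_convexHull_sum_smul_eq p hν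
  refine ⟨a, ha, ?_⟩
  have hνsum : ∑ j, ν j = t := by simp [ν, Finset.sum_sub_distrib, hμ₁]
  have hνp : ∑ j, ν j • p j = ∑ j, μ j • p j - (1 - t) • p j₀ := by
    simp [ν, sub_smul, Finset.sum_sub_distrib, Pi.single_apply]
  rw [hνsum] at hsum
  rw [homothety_apply, vsub_eq_sub, vadd_eq_add, smul_sub, ← hsum, hνp, sub_smul, one_smul]
  abel

lemma centroid_mem_image_homothety {s : Finset ι} {j₀ : ι} (hj₀ : j₀ ∈ s) :
    s.centroid ℝ p ∈ homothety (p j₀) (1 - (Fintype.card ι : ℝ)⁻¹) '' convexHull ℝ (range p) := by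
  have hw₁ := s.sum_centroidWeightsIndicator_eq_one_of_nonempty ℝ ⟨j₀, hj₀⟩
  rw [s.centroid_eq_affineCombination_fintype ℝ,
    Finset.affineCombination_eq_linear_combination _ _ _ hw₁]
  refine sum_smul_mem_image_homothety p (fun j => ?_) hw₁ ?_
  · simp only [Finset.centroidWeightsIndicator_def, Set.indicator, Finset.centroidWeights_apply]
    split_ifs <;> positivity
  · simp only [sub_sub_cancel, Finset.centroidWeightsIndicator_def, Set.indicator_of_mem
      (Finset.mem_coe.2 hj₀), Finset.centroidWeights_apply]
    gcongr
    · exact_mod_cast Finset.card_pos.2 ⟨j₀, hj₀⟩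
    · exact_mod_cast Finset.card_le_univ s

lemma convexHull_centroids_subset_image_homothety {α : Type*} (S : α → Finset ι) {j₀ : ι}
    (hj₀ : ∀ a, j₀ ∈ S a) :
    convexHull ℝ (range fun a => (S a).centroid ℝ p) ⊆
      homothety (p j₀) (1 - (Fintype.card ι : ℝ)⁻¹) '' convexHull ℝ (range p) :=
  convexHull_min (range_subset_iff.2 fun a => centroid_mem_image_homothety p (hj₀ a))
    ((convex_convexHull ℝ _).affine_image _)

end Decomposition

section SubdivisionPoints

lemma vpt_natCast (n m : ℕ) :
    vpt n m = ∑ j ∈ Finset.range m, (((n : ℝ) + 2) / ((n : ℝ) + 1)) ^ j := by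
  rcases Nat.eq_zero_or_pos m with rfl | hm
  · simp [vpt]
  · simp [vpt, hm]

lemma vpt_succ (n : ℕ) {i : ℤ} (hi : 0 ≤ i) :
    vpt n (i + 1) = 1 + ((n : ℝ) + 2) / ((n : ℝ) + 1) * vpt n i := by
  lift i to ℕ using hi
  rw [← Nat.cast_succ, vpt_natCast, vpt_natCast, Finset.sum_range_succ', Finset.mul_sum]
  simp only [pow_succ', pow_zero]
  ring

lemma vpt_nonneg (n : ℕ) {i : ℤ} (hi : 0 ≤ i) : 0 ≤ vpt n i := by
  lift i to ℕ using hi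
  rw [vpt_natCast]
  positivity

lemma vpt_succ_le (n : ℕ) {i : ℤ} (hi : 1 ≤ i) :
    vpt n (i + 1) ≤ (1 + ((n : ℝ) + 2) / ((n : ℝ) + 1)) * vpt n i := by
  have hv : 1 ≤ vpt n i := by
    rw [show i = i - 1 + 1 by ring, vpt_succ n (by omega)]
    have hv₀ := vpt_nonneg n (i := i - 1) (by omega)
    have hr : 0 ≤ ((n : ℝ) + 2) / ((n : ℝ) + 1) := by positivity
    nlinarith
  rw [vpt_succ n (by omega)]
  linarith

end SubdivisionPoints

theorem stmt14_general (E : Type*) [NormedAddCommGroup E] [NormedSpace ℝ E]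
    (n : ℕ) (i : ℤ) (hi : 1 ≤ i) (k : ℕ) (hk : k ≤ n)
    (p : Fin (k + 1) → E × ℝ)
    (hcoord : ∀ j, (p j).2 ∈ Set.Icc (vpt n i) (vpt n (i + 1)))
    (l : ℕ) (S : Fin (l + 1) → Finset (Fin (k + 1)))
    (hS : StrictMono S) (hSne : ∀ j, (S j).Nonempty) :
    coneDiam (convexHull ℝ (Set.range fun j => Finset.centroid ℝ (S j) p))
      ≤ (1 - 1 / (((k : ℝ) + 1) ^ 3)) * coneDiam (convexHull ℝ (Set.range p)) := by
  obtain ⟨j₀, hj₀⟩ := hSne 0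
  have hσ := convexHull_centroids_subset_image_homothety p S
    (fun a => hS.monotone (Fin.zero_le a) hj₀)
  rw [Fintype.card_fin, Nat.cast_succ] at hσ
  set t : ℝ := 1 - ((k : ℝ) + 1)⁻¹
  set r : ℝ := ((k : ℝ) + 2) / ((k : ℝ) + 1)
  have hτ : IsCompact (convexHull ℝ (range p)) := (finite_range p).isCompact_convexHull ℝ
  have hv : 0 ≤ vpt n i := vpt_nonneg n (by omega)
  have hrn : ((n : ℝ) + 2) / ((n : ℝ) + 1) ≤ r := by
    rw [div_le_div_iff₀ (by positivity) (by positivity)]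
    nlinarith [(Nat.cast_le.2 hk : (k : ℝ) ≤ n)]
  have hP : (p j₀).2 ≤ (1 + r) * vpt n i :=
    (hcoord j₀).2.trans ((vpt_succ_le n hi).trans (by gcongr))
  have hsv : ∀ x ∈ convexHull ℝ (range p), vpt n i ≤ x.2 := fun x hx =>
    (snd_mem_of_mem_convexHull (convex_Icc _ _) (forall_mem_range.2 hcoord) hx).1
  have hcoef : t * (1 + (1 - t) * r) = 1 - 1 / ((k : ℝ) + 1) ^ 3 := by
    simp only [t, r]
    field_simp
    ring
  calc _ ≤ coneDiam (homothety (p j₀) t '' convexHull ℝ (range p)) :=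
        coneDiam_mono (hτ.image (homothety_continuous (p j₀) t)) hσ
    _ ≤ t * (1 + (1 - t) * r) * coneDiam (convexHull ℝ (range p)) :=
        coneDiam_image_homothety_le hτ (sub_nonneg.2 (inv_le_one_of_one_le₀ (by simp)))
          (sub_le_self _ (by positivity)) (by positivity) hv hsv hP
    _ = _ := by rw [hcoef]

/-- for a simplex τ (of dimension k, k ≤ n = dim X + 1) linearly embedded in
X × [v_i, v_{i+1}] with i ≥ 1, every simplex of its barycentric subdivision (spanned by
the barycenters of a strict chain of faces) has diameter, measured in the open cone
metric, at most (1 − 1/(|τ|+1)³) times the diameter of τ. -/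
theorem stmt14 (E : Type*) [NormedAddCommGroup E] [NormedSpace ℝ E]
    (n : ℕ) (hn : 1 ≤ n) (i : ℤ) (hi : 1 ≤ i) (k : ℕ) (hk : k ≤ n)
    (p : Fin (k + 1) → E × ℝ) (hp : AffineIndependent ℝ p)
    (hcoord : ∀ j, (p j).2 ∈ Set.Icc (vpt n i) (vpt n (i + 1)))
    (l : ℕ) (S : Fin (l + 1) → Finset (Fin (k + 1)))
    (hS : StrictMono S) (hSne : ∀ j, (S j).Nonempty) :
    coneDiam (convexHull ℝ (Set.range fun j => Finset.centroid ℝ (S j) p))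
      ≤ (1 - 1 / (((k : ℝ) + 1) ^ 3)) * coneDiam (convexHull ℝ (Set.range p)) :=
  stmt14_general E n i hi k hk p hcoord l S hS hSne
end

section
/- Let X be a simplicial complex, σ ∈ X, and for the barycentric subdivision Sd X define the closed dual cell D(σ,X) = {σ̂₀…σ̂ₖ ∈ Sd X : σ ≤ σ₀ < … < σₖ} and its boundary ∂D(σ,X) = {σ̂₀…σ̂ₖ : σ < σ₀ < … < σₖ}. Then there is a simplicial isomorphism ∂D(σ,X) ≅ Sd(link(σ,X)). -/
/-! Both posets consist of the simplices of `X` strictly above `σ`, once as `τ` and once as the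
face `τ \ σ` opposite to `σ`; since `σ ⊆ τ`, removing `σ` and adding it back are mutually inverse
and both preserve inclusion. -/

namespace Finset

variable {V : Type*} [DecidableEq V]

theorem sdiff_subset_sdiff_right_iff {s t u : Finset V} (hu : u ⊆ t) :
    s \ u ⊆ t \ u ↔ s ⊆ t := by
  refine ⟨fun h => ?_, fun h => sdiff_subset_sdiff h le_rfl⟩
  calc s ⊆ s \ u ∪ u := by grind
    _ ⊆ t \ u ∪ u := union_subset_union h le_rfl
    _ = t := sdiff_union_of_subset hu

def ssupsetOrderIsoDisjoint (P : Finset V → Prop) (σ : Finset V) :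
    {τ : Finset V // P τ ∧ σ ⊂ τ} ≃o {t : Finset V // t.Nonempty ∧ Disjoint σ t ∧ P (σ ∪ t)} where
  toFun τ := ⟨τ.1 \ σ, sdiff_nonempty.2 τ.2.2.not_subset, disjoint_sdiff,
    by rw [union_sdiff_of_subset τ.2.2.subset]; exact τ.2.1⟩
  invFun t := ⟨σ ∪ t.1, t.2.2.2, left_lt_sup.2 fun h => t.2.1.ne_empty (t.2.2.1.eq_bot_of_ge h)⟩
  left_inv τ := Subtype.ext (union_sdiff_of_subset τ.2.2.subset)
  right_inv t := Subtype.ext (union_sdiff_cancel_left t.2.2.1)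
  map_rel_iff' {_ τ'} := sdiff_subset_sdiff_right_iff τ'.2.2.subset

end Finset

theorem stmt17_general {V : Type} [DecidableEq V] (X : Finset V → Prop)
    (σ : Finset V) :
    Nonempty ({τ : Finset V // X τ ∧ σ ⊂ τ} ≃o
      {τ : Finset V // τ.Nonempty ∧ Disjoint σ τ ∧ X (σ ∪ τ)}) :=
  ⟨Finset.ssupsetOrderIsoDisjoint X σ⟩

/-- for a simplicial complex `X` (a downward closed family of nonempty
finite vertex sets) and a simplex `σ ∈ X`, the boundary of the closed dual cell
`∂D(σ,X)` is simplicially isomorphic to the barycentric subdivision `Sd(link(σ,X))`.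
Since the simplices of `∂D(σ,X)` are the finite chains in the poset
`{τ ∈ X : σ ⊊ τ}` and those of `Sd(link(σ,X))` are the finite chains in the poset of
simplices of `link(σ,X)`, such a simplicial isomorphism is exactly an order isomorphism
of these posets. -/
theorem stmt17 {V : Type} [DecidableEq V] (X : Finset V → Prop)
    (hdown : ∀ s t : Finset V, X t → s ⊆ t → s.Nonempty → X s)
    (σ : Finset V) (hσ : X σ) :
    Nonempty ({τ : Finset V // X τ ∧ σ ⊂ τ} ≃o
      {τ : Finset V // τ.Nonempty ∧ Disjoint σ τ ∧ X (σ ∪ τ)}) :=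
  stmt17_general X σ
end
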